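/- arXiv:2107.07626 — 5 statements merged into one kernel-verified Lean document; each statement's English description precedes it below -/
import Mathlib

section
/- Let K be a number field with ring of integers O_K, let {p_1, ..., p_k} ⊆ K[x] be polynomials each mapping O_K into O_K, which are jointly intersective (for every finite-index additive subgroup Λ of O_K there exists ξ ∈ O_K with p_i(ξ) ∈ Λ for all i). Then for every r ∈ O_K \ {0} there exist ξ ∈ O_K and D ∈ O_K \ {0} such that p_i(ξ + Dm) ∈ rO_K for every m ∈ O_K and every i = 1, ..., k. -/
open NumberField Polynomial

/-- If `p_1, …, p_k ∈ K[x]` are `𝓞 K`-valued and jointly intersective (for every finite-index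
additive subgroup `Λ` of `𝓞 K` there is `ξ` with all `p_i(ξ) ∈ Λ`), then for every nonzero
`r ∈ 𝓞 K` there exist `ξ ∈ 𝓞 K` and `D ≠ 0` such that `p_i(ξ + D m) ∈ r 𝓞 K` for all `m`, `i`. -/
theorem jointly_intersective_arith_progression {K : Type*} [Field K] [NumberField K]
    {k : ℕ} (p : Fin k → Polynomial K)
    (hval : ∀ (i : Fin k) (n : 𝓞 K), ∃ y : 𝓞 K, Polynomial.eval (n : K) (p i) = (y : K))
    (hint : ∀ Λ : AddSubgroup (𝓞 K), Λ.index ≠ 0 →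
      ∃ ξ : 𝓞 K, ∀ i : Fin k, ∃ y ∈ Λ, Polynomial.eval (ξ : K) (p i) = (y : K))
    (r : 𝓞 K) (hr : r ≠ 0) :
    ∃ ξ D : 𝓞 K, D ≠ 0 ∧ ∀ (m : 𝓞 K) (i : Fin k), ∃ y : 𝓞 K,
      Polynomial.eval (((ξ + D * m : 𝓞 K)) : K) (p i) = ((r * y : 𝓞 K) : K) := by
  classical
  -- the finite-index subgroup r·𝓞K
  set I : Ideal (𝓞 K) := Ideal.span {r} with hI
  have hIbot : I ≠ ⊥ := by
    simpa [hI, Ideal.span_singleton_eq_bot] using hr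
  haveI fQ : Fintype ((𝓞 K) ⧸ I) := @Fintype.ofFinite _ (Ideal.finiteQuotientOfFreeOfNeBot I hIbot)
  have hidx : (I.toAddSubgroup).index ≠ 0 := by
    haveI : Finite ((𝓞 K) ⧸ I.toAddSubgroup) := @Finite.of_fintype _ fQ
    exact AddSubgroup.index_ne_zero_of_finite
  obtain ⟨ξ, hξ⟩ := hint I.toAddSubgroup hidx
  -- clear denominators of each p i
  choose c hc using fun i =>
    IsLocalization.integerNormalization_map_to_map (nonZeroDivisors (𝓞 K)) (p i)
  set q : Fin k → Polynomial (𝓞 K) :=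
    fun i => IsLocalization.integerNormalization (nonZeroDivisors (𝓞 K)) (p i) with hqdef
  set C : 𝓞 K := ∏ i : Fin k, (c i : 𝓞 K) with hC
  have hCne : C ≠ 0 := by
    refine Finset.prod_ne_zero_iff.mpr fun i _ => ?_
    exact nonZeroDivisors.coe_ne_zero (c i)
  refine ⟨ξ, r * C, mul_ne_zero hr hCne, fun m i => ?_⟩
  -- key evaluations in 𝓞 K
  have hkey : ∀ n : 𝓞 K, ∃ Y : 𝓞 K, ((p i).eval (n : K) = (Y : K)) ∧
      (q i).eval n = (c i : 𝓞 K) * Y := by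
    intro n
    obtain ⟨Y, hY⟩ := hval i n
    refine ⟨Y, hY, ?_⟩
    apply RingOfIntegers.coe_injective
    have := congrArg (Polynomial.eval (n : K)) (hc i)
    rw [Polynomial.eval_map, Polynomial.eval₂_at_apply] at this
    rw [map_mul]
    calc (algebraMap (𝓞 K) K) ((q i).eval n)
        = ((c i : 𝓞 K) • p i).eval (n : K) := this
      _ = (algebraMap (𝓞 K) K) (c i) * (p i).eval (n : K) := by
          rw [Algebra.smul_def, Polynomial.eval_mul, IsScalarTower.algebraMap_apply (𝓞 K) K K[X],
            Polynomial.algebraMap_eq, Polynomial.eval_C]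
      _ = (algebraMap (𝓞 K) K) (c i) * (algebraMap (𝓞 K) K) Y := by rw [hY]
  obtain ⟨Y1, hY1, hq1⟩ := hkey (ξ + r * C * m)
  obtain ⟨Y0, hY0, hq0⟩ := hkey ξ
  -- p i (ξ) lies in r 𝓞 K
  obtain ⟨y, hyI, hy⟩ := hξ i
  have hY0y : Y0 = y := RingOfIntegers.coe_injective (hY0.symm.trans hy)
  obtain ⟨y0, hy0⟩ : r ∣ Y0 := by
    rw [hY0y]
    exact (Ideal.mem_span_singleton).mp hyI
  -- divisibility of the difference
  have hdvd : (r * C * m) ∣ ((q i).eval (ξ + r * C * m) - (q i).eval ξ) := by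
    simpa using Polynomial.sub_dvd_eval_sub (ξ + r * C * m) ξ (q i)
  obtain ⟨t, ht⟩ := hdvd
  obtain ⟨C', hC'⟩ : (c i : 𝓞 K) ∣ C :=
    Finset.dvd_prod_of_mem (fun j => (c j : 𝓞 K)) (Finset.mem_univ i)
  have hcne : (c i : 𝓞 K) ≠ 0 := nonZeroDivisors.coe_ne_zero (c i)
  have hfin : Y1 = r * (y0 + C' * m * t) := by
    apply mul_left_cancel₀ hcne
    rw [← hq1]
    have : (q i).eval (ξ + r * C * m) = (q i).eval ξ + r * C * m * t := by
      rw [← ht]; ring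
    rw [this, hq0, hy0, hC']
    ring
  exact ⟨y0 + C' * m * t, by rw [← hfin]; exact hY1⟩
end

section
/- Let K be a number field of degree d with ring of integers O_K and integral basis {b_1, ..., b_d}, and let p ∈ K[x] be a nonconstant O_K-valued polynomial. Define coordinate polynomials p_1, ..., p_d ∈ ℚ[x_1, ..., x_d] by p(∑_{i=1}^d n_i b_i) = ∑_{i=1}^d p_i(n_1, ..., n_d) b_i. Then the Jacobian matrix (∂p_j/∂x_i)_{i,j} equals the matrix whose i-th row is the coordinate vector of p'(x)·b_i, and hence has rank d (as a matrix over the field of rational functions in x_1,...,x_d). -/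
open NumberField Polynomial

/-- Let `p ∈ K[x]` be a nonconstant `𝓞 K`-valued polynomial, with coordinate polynomials
`P j ∈ ℚ[x_1, …, x_d]` relative to the integral basis `b` (so that, as an identity of
polynomials, `p(∑ x_l b_l) = ∑ P_j(x) b_j`).  Then the Jacobian matrix `(∂P_j/∂x_i)` is
the matrix whose `i`-th row is the `b`-coordinate vector of `p'(x)·b_i`, and it has rank `d`
over the field of rational functions. -/
theorem jacobian_of_coordinate_polynomials
    {K : Type*} [Field K] [NumberField K] {d : ℕ}
    (b : Module.Basis (Fin d) ℤ (𝓞 K))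
    (p : Polynomial K) (hp : 0 < p.natDegree)
    (hval : ∀ n : 𝓞 K, ∃ y : 𝓞 K, Polynomial.eval (n : K) p = (y : K))
    (P : Fin d → MvPolynomial (Fin d) ℚ)
    (hP : Polynomial.aeval (∑ l, MvPolynomial.X l * MvPolynomial.C ((b l : K))) p
      = ∑ j, (MvPolynomial.map (algebraMap ℚ K) (P j)) * MvPolynomial.C ((b j : K))) :
    (∀ i : Fin d,
      ∑ j, (MvPolynomial.map (algebraMap ℚ K) (MvPolynomial.pderiv i (P j)))
          * MvPolynomial.C ((b j : K))
        = Polynomial.aeval (∑ l, MvPolynomial.X l * MvPolynomial.C ((b l : K)))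
            (Polynomial.derivative p) * MvPolynomial.C ((b i : K))) ∧
    ((Matrix.of fun i j : Fin d => MvPolynomial.pderiv i (P j)).map
        (algebraMap (MvPolynomial (Fin d) ℚ) (FractionRing (MvPolynomial (Fin d) ℚ)))).rank
      = d := by
  classical
  set s : MvPolynomial (Fin d) K := ∑ l, MvPolynomial.X l * MvPolynomial.C ((b l : K)) with hs
  set D : MvPolynomial (Fin d) K := Polynomial.aeval s (Polynomial.derivative p) with hD
  -- pderiv i s = C (b i)
  have hds : ∀ i, MvPolynomial.pderiv i s = MvPolynomial.C ((b i : K)) := by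
    intro i
    rw [hs, map_sum, Finset.sum_eq_single i]
    · simp
    · intro l _ hl
      rw [Derivation.leibniz, MvPolynomial.pderiv_X_of_ne hl, MvPolynomial.pderiv_C]
      simp
    · simp
  -- Part 1
  have key : ∀ i : Fin d,
      ∑ j, (MvPolynomial.map (algebraMap ℚ K) (MvPolynomial.pderiv i (P j)))
          * MvPolynomial.C ((b j : K)) = D * MvPolynomial.C ((b i : K)) := by
    intro i
    have h := congrArg (MvPolynomial.pderiv i) hP
    rw [Derivation.map_aeval, hds i, smul_eq_mul, map_sum] at h
    have hsum : ∀ j : Fin d, MvPolynomial.pderiv i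
        ((MvPolynomial.map (algebraMap ℚ K)) (P j) * MvPolynomial.C ((b j : K)))
        = (MvPolynomial.map (algebraMap ℚ K)) (MvPolynomial.pderiv i (P j))
          * MvPolynomial.C ((b j : K)) := fun j => by
      rw [Derivation.leibniz, MvPolynomial.pderiv_C, smul_zero, zero_add, smul_eq_mul,
        MvPolynomial.pderiv_map, mul_comm]
    rw [Finset.sum_congr rfl (fun j _ => hsum j)] at h
    exact h.symm
  refine ⟨key, ?_⟩
  -- d ≥ 1
  have hne : Nonempty (Fin d) := b.index_nonempty
  obtain ⟨i0⟩ := hne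
  have hb0 : (b i0 : K) ≠ 0 := by
    simpa using b.ne_zero i0
  -- D ≠ 0
  have hDne : D ≠ 0 := by
    intro h0
    set ψ : MvPolynomial (Fin d) K →ₐ[K] Polynomial K :=
      MvPolynomial.aeval (fun l => if l = i0 then Polynomial.C ((b i0 : K)⁻¹) * Polynomial.X
        else 0) with hψ
    have hψs : ψ s = Polynomial.X := by
      rw [hs, map_sum, Finset.sum_eq_single i0]
      · rw [map_mul, MvPolynomial.aeval_X, MvPolynomial.aeval_C, if_pos rfl,
          Polynomial.algebraMap_eq, mul_comm, ← mul_assoc, ← Polynomial.C_mul,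
          mul_inv_cancel₀ hb0, Polynomial.C_1, one_mul]
      · intro l _ hl
        simp [hψ, if_neg hl]
      · simp
    have : Polynomial.derivative p = 0 := by
      have h1 := congrArg ψ h0
      rw [hD, map_zero, ← Polynomial.aeval_algHom_apply, hψs,
        Polynomial.aeval_X_left_apply] at h1
      exact h1
    have := Polynomial.natDegree_eq_zero_of_derivative_eq_zero this
    omega
  -- linear independence of (b i : K) over ℚ
  have hli : LinearIndependent ℚ (fun i => (b i : K)) := by
    have h2 : (fun i => ((b i : K))) = ⇑(b.localizationLocalization ℚ (nonZeroDivisors ℤ) K) := by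
      funext i
      rw [Module.Basis.localizationLocalization_apply]
    rw [h2]
    exact (b.localizationLocalization ℚ (nonZeroDivisors ℤ) K).linearIndependent
  -- determinant nonzero
  set M : Matrix (Fin d) (Fin d) (MvPolynomial (Fin d) ℚ) :=
    Matrix.of fun i j : Fin d => MvPolynomial.pderiv i (P j) with hM
  have hdet : M.det ≠ 0 := by
    intro h0
    obtain ⟨v, hv, hvM⟩ := Matrix.exists_vecMul_eq_zero_iff.mpr h0
    have hcol : ∀ j, ∑ i, (MvPolynomial.map (algebraMap ℚ K) (v i))
        * (MvPolynomial.map (algebraMap ℚ K) (MvPolynomial.pderiv i (P j))) = 0 := by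
      intro j
      have := congrFun hvM j
      have := congrArg (MvPolynomial.map (algebraMap ℚ K)) this
      simpa [Matrix.vecMul, dotProduct, map_sum, hM] using this
    have hT : D * ∑ i, (MvPolynomial.map (algebraMap ℚ K) (v i))
        * MvPolynomial.C ((b i : K)) = 0 := by
      rw [Finset.mul_sum]
      calc ∑ i, D * ((MvPolynomial.map (algebraMap ℚ K) (v i)) * MvPolynomial.C ((b i : K)))
          = ∑ i, (MvPolynomial.map (algebraMap ℚ K) (v i))
            * ∑ j, (MvPolynomial.map (algebraMap ℚ K) (MvPolynomial.pderiv i (P j)))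
              * MvPolynomial.C ((b j : K)) := by
            refine Finset.sum_congr rfl fun i _ => ?_
            rw [key i]; ring
        _ = ∑ i, ∑ j, (MvPolynomial.map (algebraMap ℚ K) (v i))
            * (MvPolynomial.map (algebraMap ℚ K) (MvPolynomial.pderiv i (P j)))
              * MvPolynomial.C ((b j : K)) := by
            refine Finset.sum_congr rfl fun i _ => ?_
            rw [Finset.mul_sum]
            exact Finset.sum_congr rfl fun j _ => by ring
        _ = ∑ j, ∑ i, (MvPolynomial.map (algebraMap ℚ K) (v i))
            * (MvPolynomial.map (algebraMap ℚ K) (MvPolynomial.pderiv i (P j)))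
              * MvPolynomial.C ((b j : K)) := Finset.sum_comm
        _ = ∑ j, (∑ i, (MvPolynomial.map (algebraMap ℚ K) (v i))
            * (MvPolynomial.map (algebraMap ℚ K) (MvPolynomial.pderiv i (P j))))
              * MvPolynomial.C ((b j : K)) :=
            Finset.sum_congr rfl fun j _ => (Finset.sum_mul _ _ _).symm
        _ = 0 := by simp [hcol]
    have hT0 : ∑ i, (MvPolynomial.map (algebraMap ℚ K) (v i))
        * MvPolynomial.C ((b i : K)) = 0 := by
      rcases mul_eq_zero.mp hT with h | h
      · exact absurd h hDne
      · exact h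
    apply hv
    funext i
    apply MvPolynomial.ext
    intro m
    have hcoeff : ∑ i, ((v i).coeff m) • (b i : K) = 0 := by
      have := congrArg (MvPolynomial.coeff m) hT0
      rw [MvPolynomial.coeff_sum, MvPolynomial.coeff_zero] at this
      rw [← this]
      refine Finset.sum_congr rfl fun i _ => ?_
      rw [mul_comm ((MvPolynomial.map (algebraMap ℚ K)) (v i)) (MvPolynomial.C ((b i : K))),
        MvPolynomial.coeff_C_mul, MvPolynomial.coeff_map, Algebra.smul_def, mul_comm]
    have := Fintype.linearIndependent_iff.mp hli (fun i => (v i).coeff m) hcoeff i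
    simpa using this
  -- conclude rank
  have hunit : IsUnit (M.map (algebraMap (MvPolynomial (Fin d) ℚ)
      (FractionRing (MvPolynomial (Fin d) ℚ)))) := by
    rw [Matrix.isUnit_iff_isUnit_det, ← RingHom.mapMatrix_apply, ← RingHom.map_det,
      isUnit_iff_ne_zero]
    intro h
    exact hdet (IsFractionRing.injective (MvPolynomial (Fin d) ℚ)
      (FractionRing (MvPolynomial (Fin d) ℚ)) (by rw [h, map_zero]))
  rw [Matrix.rank_of_isUnit _ hunit, Fintype.card_fin]
end

section
/- Let K be a number field of degree d with ring of integers O_K and integral basis {b_1, ..., b_d}, and let {p_1, ..., p_k} ⊆ K[x] be an independent family of polynomials over K (i.e., {1, p_1, ..., p_k} is K-linearly independent). Let p_{i,j} ∈ ℚ[x_1, ..., x_d] be the coordinate polynomials defined by p_i(∑_{l=1}^d x_l b_l) = ∑_{j=1}^d p_{i,j}(x_1, ..., x_d) b_j. Then the family {p_{i,j} : 1 ≤ i ≤ k, 1 ≤ j ≤ d} is independent over ℚ: for every nonzero rational coefficient vector (c_{i,j}), the polynomial ∑_{i,j} c_{i,j} p_{i,j} is nonconstant. -/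
open NumberField Polynomial

lemma coeff_comp_C_mul_X {R : Type*} [CommSemiring R] (p : R[X]) (β : R) (m : ℕ) :
    (p.comp (C β * X)).coeff m = p.coeff m * β ^ m := by
  induction p using Polynomial.induction_on' with
  | add p q hp hq => simp [add_comp, hp, hq, add_mul]
  | monomial n a =>
    rw [monomial_comp, mul_pow, ← C_pow, ← mul_assoc, ← C_mul]
    simp only [coeff_C_mul, coeff_X_pow, coeff_monomial]
    split_ifs with h h' h'
    · subst h'; ring
    · simp_all
    · simp_all
    · ring

lemma aeval_eq_comp {R : Type*} [CommSemiring R] (p q : R[X]) :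
    Polynomial.aeval q p = p.comp q := by
  rw [Polynomial.aeval_def, Polynomial.comp, Polynomial.algebraMap_eq]

lemma eq_zero_of_trace_pow {K : Type*} [Field K] [NumberField K] {a : K} {m : ℕ} (hm : m ≠ 0)
    (h : ∀ β : K, Algebra.trace ℚ K (a * β ^ m) = 0) : a = 0 := by
  have key : ∀ γ : K, Algebra.trace ℚ K (a * γ) = 0 := by
    intro γ
    set g : Polynomial ℚ := ∑ t ∈ Finset.range (m+1),
      C ((m.choose t : ℚ) * Algebra.trace ℚ K (a * γ ^ t)) * X ^ (m - t) with hg_def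
    have expand : ∀ s : ℚ, Algebra.trace ℚ K (a * (γ + algebraMap ℚ K s) ^ m)
        = ∑ t ∈ Finset.range (m+1),
            (m.choose t : ℚ) * Algebra.trace ℚ K (a * γ ^ t) * s ^ (m - t) := by
      intro s
      rw [add_pow, Finset.mul_sum, map_sum]
      refine Finset.sum_congr rfl fun t _ => ?_
      have e1 : a * (γ ^ t * algebraMap ℚ K s ^ (m - t) * (m.choose t : K))
          = ((m.choose t : ℚ) * s ^ (m - t)) • (a * γ ^ t) := by
        rw [Algebra.smul_def, map_mul, map_pow, map_natCast]; ring
      rw [e1, map_smul, smul_eq_mul]; ring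
    have hg0 : g = 0 := by
      apply Polynomial.funext
      intro s
      rw [hg_def]
      simp only [Polynomial.eval_finset_sum, eval_mul, eval_C, eval_pow, eval_X, eval_zero]
      rw [← expand s, h]
    have hcoeff := congrArg (fun q : Polynomial ℚ => q.coeff (m - 1)) hg0
    simp only [hg_def, Polynomial.finset_sum_coeff, coeff_C_mul, coeff_X_pow,
      Polynomial.coeff_zero] at hcoeff
    have h1 : (∑ x ∈ Finset.range (m + 1), (m.choose x : ℚ) * (Algebra.trace ℚ K) (a * γ ^ x)
        * if m - 1 = m - x then 1 else 0)
        = (m.choose 1 : ℚ) * (Algebra.trace ℚ K) (a * γ ^ 1)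
          * if m - 1 = m - 1 then (1:ℚ) else 0 := by
      apply Finset.sum_eq_single_of_mem 1 (Finset.mem_range.mpr (by omega))
      intro x hx hx1
      have hxm := Finset.mem_range.mp hx
      have : ¬(m - 1 = m - x) := by omega
      simp [this]
    rw [h1] at hcoeff
    have hmQ : (m : ℚ) ≠ 0 := Nat.cast_ne_zero.mpr hm
    have h2 : (m : ℚ) * Algebra.trace ℚ K (a * γ) = 0 := by simpa using hcoeff
    exact (mul_eq_zero.mp h2).resolve_left hmQ
  have hnd := (traceForm_nondegenerate ℚ K).1 a
  simp only [Algebra.traceForm_apply] at hnd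
  exact hnd key

/-- If `{p_1, …, p_k} ⊆ K[x]` is an independent family over `K` (no nonzero `K`-linear
combination is constant), then the coordinate polynomials `P i j` relative to the integral
basis `b` (so that `p_i(∑ x_l b_l) = ∑_j P_{i,j}(x) b_j` as polynomials) form an independent
family over `ℚ`. -/
theorem coordinate_polynomials_independent
    {K : Type*} [Field K] [NumberField K] {d k : ℕ}
    (b : Module.Basis (Fin d) ℤ (𝓞 K))
    (p : Fin k → Polynomial K)
    (hind : ∀ c : Fin k → K, c ≠ 0 → ∀ r : K,
      ∑ i, Polynomial.C (c i) * p i ≠ Polynomial.C r)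
    (P : Fin k → Fin d → MvPolynomial (Fin d) ℚ)
    (hP : ∀ i : Fin k,
      Polynomial.aeval (∑ l, MvPolynomial.X l * MvPolynomial.C ((b l : K))) (p i)
        = ∑ j, (MvPolynomial.map (algebraMap ℚ K) (P i j)) * MvPolynomial.C ((b j : K))) :
    ∀ c : Fin k → Fin d → ℚ, c ≠ 0 → ∀ r : ℚ,
      ∑ i, ∑ j, MvPolynomial.C (c i j) * P i j ≠ MvPolynomial.C r := by
  intro c hc r h
  classical
  -- the induced `ℚ`-basis of `K`
  let B : Module.Basis (Fin d) ℚ K := Module.Basis.localizationLocalization ℚ (nonZeroDivisors ℤ) K b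
  have hBl : ∀ l, B l = (b l : K) := fun l =>
    Module.Basis.localizationLocalization_apply ℚ (nonZeroDivisors ℤ) K b l
  have nondeg := traceForm_nondegenerate ℚ K
  -- dual basis w.r.t. the trace form
  let t : Module.Basis (Fin d) ℚ K := (Algebra.traceForm ℚ K).dualBasis nondeg B
  obtain ⟨i0, hi0⟩ := Function.ne_iff.mp hc
  obtain ⟨j0, hj0⟩ := Function.ne_iff.mp hi0
  simp only [Pi.zero_apply] at hj0
  -- the coefficients of the K-linear combination
  set θ : Fin k → K := fun i => ∑ j, c i j • t j with hθ_def
  have hθ : θ ≠ 0 := by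
    intro h0
    exact hj0 (Fintype.linearIndependent_iff.mp t.linearIndependent (c i0)
      (congrFun h0 i0) j0)
  have htrθ : ∀ i j, Algebra.trace ℚ K (θ i * B j) = c i j := by
    intro i j
    have e : θ i * B j = ∑ j', c i j' • (t j' * B j) := by
      rw [hθ_def]
      rw [Finset.sum_mul]
      exact Finset.sum_congr rfl fun j' _ => smul_mul_assoc _ _ _
    rw [e, map_sum]
    have e2 : ∀ j', Algebra.trace ℚ K (t j' * B j) = if j = j' then 1 else 0 := by
      intro j'
      have e3 := (Algebra.traceForm ℚ K).apply_dualBasis_left nondeg B j' j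
      simpa [Algebra.traceForm_apply] using e3
    simp only [map_smul, smul_eq_mul, e2, mul_ite, mul_one, mul_zero]
    simp
  set q : Polynomial K := ∑ i, Polynomial.C (θ i) * p i with hq_def
  have hqne : ∀ r' : K, q ≠ Polynomial.C r' := fun r' => hind θ hθ r'
  set m : ℕ := q.natDegree with hm_def
  have hm : m ≠ 0 := by
    intro h0
    exact hqne (q.coeff 0) (Polynomial.eq_C_of_natDegree_eq_zero h0)
  have hq0 : q ≠ 0 := by
    intro h0
    exact hqne 0 (by rw [h0, map_zero])
  set a : K := q.coeff m with ha_def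
  have ha : a ≠ 0 := Polynomial.leadingCoeff_ne_zero.mpr hq0
  have hacoeff : a = ∑ i, θ i * (p i).coeff m := by
    rw [ha_def, hq_def, Polynomial.finset_sum_coeff]
    exact Finset.sum_congr rfl fun i _ => Polynomial.coeff_C_mul _
  -- main claim : all traces of a * β ^ m vanish
  have claim : ∀ β : K, Algebra.trace ℚ K (a * β ^ m) = 0 := by
    intro β
    set v : Fin d → ℚ := fun l => B.repr β l with hv_def
    set ρ : MvPolynomial (Fin d) K →ₐ[K] Polynomial K :=
      MvPolynomial.aeval (fun l => Polynomial.C (algebraMap ℚ K (v l)) * Polynomial.X)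
      with hρ_def
    set σp : MvPolynomial (Fin d) ℚ →ₐ[ℚ] Polynomial ℚ :=
      MvPolynomial.aeval (fun l => Polynomial.C (v l) * Polynomial.X) with hσ_def
    have hmap : ∀ Q : MvPolynomial (Fin d) ℚ,
        ρ (MvPolynomial.map (algebraMap ℚ K) Q)
          = Polynomial.map (algebraMap ℚ K) (σp Q) := by
      intro Q
      have hhom : (algebraMap ℚ K) = ↑(Algebra.ofId ℚ K) :=
        RingHom.ext fun x => (Algebra.ofId_apply K x).symm
      rw [hρ_def, hσ_def, MvPolynomial.aeval_map_algebraMap]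
      conv_rhs => rw [hhom, ← Polynomial.coe_mapAlgHom, ← AlgHom.comp_apply,
        MvPolynomial.comp_aeval]
      refine congrArg (fun f => MvPolynomial.aeval (R := ℚ) f Q) (funext fun l => ?_)
      simp [Polynomial.coe_mapAlgHom, Algebra.ofId_apply]
    have hρL : ρ (∑ l, MvPolynomial.X l * MvPolynomial.C ((b l : K)))
        = Polynomial.C β * Polynomial.X := by
      rw [map_sum]
      have e : ∀ l, ρ (MvPolynomial.X l * MvPolynomial.C ((b l : K)))
          = Polynomial.C (v l • B l) * Polynomial.X := by
        intro l
        rw [map_mul, hρ_def, MvPolynomial.aeval_X, MvPolynomial.aeval_C,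
          Polynomial.algebraMap_eq, Algebra.smul_def, hBl, C_mul]
        ring
      rw [Finset.sum_congr rfl fun l _ => e l, ← Finset.sum_mul, ← map_sum Polynomial.C]
      have e4 : ∑ l, v l • B l = β := by
        rw [hv_def]; exact B.sum_repr β
      rw [e4]
    have hA : ∀ i, Polynomial.aeval (Polynomial.C β * Polynomial.X) (p i)
        = ∑ j, Polynomial.map (algebraMap ℚ K) (σp (P i j)) * Polynomial.C ((b j : K)) := by
      intro i
      have h1 := congrArg ρ (hP i)
      rw [← Polynomial.aeval_algHom_apply, hρL, map_sum] at h1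
      have h2 : ∀ j, ρ (MvPolynomial.map (algebraMap ℚ K) (P i j)
            * MvPolynomial.C ((b j : K)))
          = Polynomial.map (algebraMap ℚ K) (σp (P i j)) * Polynomial.C ((b j : K)) := by
        intro j
        rw [map_mul, hmap]
        congr 1
        rw [hρ_def, MvPolynomial.aeval_C, Polynomial.algebraMap_eq]
      rw [Finset.sum_congr rfl fun j _ => h2 j] at h1
      exact h1
    have hcoeffA : ∀ i, (p i).coeff m * β ^ m
        = ∑ j, algebraMap ℚ K ((σp (P i j)).coeff m) * (b j : K) := by
      intro i
      have h3 := congrArg (fun w : Polynomial K => w.coeff m) (hA i)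
      simp only [aeval_eq_comp, coeff_comp_C_mul_X, Polynomial.finset_sum_coeff,
        Polynomial.coeff_mul_C, Polynomial.coeff_map] at h3
      exact h3
    have hC : ∀ x : ℚ, σp (MvPolynomial.C x) = Polynomial.C x := fun x => by
      rw [hσ_def, MvPolynomial.aeval_C, Polynomial.algebraMap_eq]
    have h4 := congrArg σp h
    simp only [map_sum, map_mul, hC] at h4
    have h5 := congrArg (fun w : Polynomial ℚ => w.coeff m) h4
    simp only [Polynomial.finset_sum_coeff, Polynomial.coeff_C_mul] at h5
    rw [Polynomial.coeff_C, if_neg hm] at h5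
    -- put everything together
    have e5 : a * β ^ m = ∑ i, ∑ j, ((σp (P i j)).coeff m) • (θ i * B j) := by
      rw [hacoeff, Finset.sum_mul]
      refine Finset.sum_congr rfl fun i _ => ?_
      rw [mul_assoc, hcoeffA i, Finset.mul_sum]
      refine Finset.sum_congr rfl fun j _ => ?_
      rw [Algebra.smul_def, hBl]
      ring
    rw [e5, map_sum]
    simp only [map_sum, map_smul, smul_eq_mul, htrθ]
    rw [Finset.sum_congr rfl fun i _ => Finset.sum_congr rfl fun j _ => mul_comm _ _]
    exact h5
  exact ha (eq_zero_of_trace_pow hm claim)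
end

section
/- Let H be a compact abelian group with Haar probability measure, let a_1, a_2 be coprime nonzero integers with a_3 = a_1 + a_2, and suppose multiplication by a_3, by a_2 - a_1, and by a_1 a_2 are measure-preserving surjective endomorphisms of H. Then for any measurable F : H → [0, 1], ∫∫∫ F(h) F(h + a_1 u + a_1² v) F(h + a_2 u + a_2² v) F(h + a_3 u + a_3² v) dh du dv ≥ (∫ F dm_H)^4. -/
open MeasureTheory Function Filter Topology

set_option linter.unusedSectionVars false
set_option linter.unusedVariables false

namespace TripleAvg

variable {H : Type*} [AddCommGroup H] [TopologicalSpace H]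
    [IsTopologicalAddGroup H] [CompactSpace H] [MeasurableSpace H] [BorelSpace H]
    (μ : Measure H) [IsProbabilityMeasure μ] [μ.IsAddHaarMeasure]

lemma intBdd {f : H → ℝ} (hf : AEStronglyMeasurable f μ) {C : ℝ} (h : ∀ x, ‖f x‖ ≤ C) :
    Integrable f μ :=
  ⟨hf, HasFiniteIntegral.of_bounded (C := C) (Eventually.of_forall h)⟩

lemma int_comp_smul {n : ℤ} (hn : MeasurePreserving (fun x : H => n • x) μ μ)
    {f : H → ℝ} (hf : AEStronglyMeasurable f μ) :
    ∫ x, f (n • x) ∂μ = ∫ x, f x ∂μ := by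
  have h1 : ∫ x, f x ∂μ = ∫ x, f x ∂(μ.map (fun x : H => n • x)) := by rw [hn.map_eq]
  rw [h1, integral_map hn.measurable.aemeasurable (by rwa [hn.map_eq])]

lemma int_comp_add_smul {n : ℤ} (hn : MeasurePreserving (fun x : H => n • x) μ μ)
    (c : H) {f : H → ℝ} (hf : AEStronglyMeasurable f μ) :
    ∫ v, f (c + n • v) ∂μ = ∫ x, f x ∂μ := by
  have hc : MeasurePreserving (fun x : H => c + x) μ μ := measurePreserving_add_left μ c
  have h2 : AEStronglyMeasurable (fun w => f (c + w)) μ :=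
    hf.comp_quasiMeasurePreserving hc.quasiMeasurePreserving
  calc ∫ v, f (c + n • v) ∂μ = ∫ v, (fun w => f (c + w)) (n • v) ∂μ := rfl
    _ = ∫ w, f (c + w) ∂μ := int_comp_smul μ hn h2
    _ = ∫ x, f x ∂μ := integral_add_left_eq_self f c

lemma int_comp_sub_smul {n : ℤ} (hn : MeasurePreserving (fun x : H => n • x) μ μ)
    (c : H) {f : H → ℝ} (hf : AEStronglyMeasurable f μ) :
    ∫ v, f (c - n • v) ∂μ = ∫ x, f x ∂μ := by
  have h1 : ∀ v : H, f (c - n • v) = (fun w => f (c + n • w)) (-v) := by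
    intro v; simp [smul_neg, sub_eq_add_neg]
  calc ∫ v, f (c - n • v) ∂μ = ∫ v, (fun w => f (c + n • w)) (-v) ∂μ := by
        simp only [h1]
    _ = ∫ w, f (c + n • w) ∂μ := integral_neg_eq_self (fun w => f (c + n • w)) μ
    _ = ∫ x, f x ∂μ := int_comp_add_smul μ hn c hf

/-- average L¹-difference between a translate of `f` and `f`. -/
noncomputable def aveDiff (f : H → ℝ) (δ : H) : ℝ := ∫ w, |f (δ + w) - f w| ∂μ

lemma aveDiff_nonneg (f : H → ℝ) (δ : H) : 0 ≤ aveDiff μ f δ :=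
  integral_nonneg fun w => abs_nonneg _

lemma meas_affine {f : H → ℝ} (hf : Measurable f) (c : H) (n : ℤ) :
    Measurable fun v : H => f (c + n • v) :=
  hf.comp (continuous_const.add (continuous_zsmul n)).measurable

lemma int_abs_comp {n : ℤ} (hn : MeasurePreserving (fun x : H => n • x) μ μ)
    (c c' : H) {f : H → ℝ} (hf : Measurable f) :
    ∫ v, |f (c + n • v) - f (c' + n • v)| ∂μ = aveDiff μ f (c - c') := by
  have h1 : ∀ v : H, |f (c + n • v) - f (c' + n • v)|
      = (fun w => |f (c - c' + w) - f w|) (c' + n • v) := by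
    intro v
    have : c - c' + (c' + n • v) = c + n • v := by abel
    simp only [this]
  have h2 : AEStronglyMeasurable (fun w => |f (c - c' + w) - f w|) μ :=
    (((hf.comp (continuous_const.add continuous_id).measurable).sub hf).abs).aestronglyMeasurable
  calc ∫ v, |f (c + n • v) - f (c' + n • v)| ∂μ
      = ∫ v, (fun w => |f (c - c' + w) - f w|) (c' + n • v) ∂μ := by simp only [h1]
    _ = ∫ w, |f (c - c' + w) - f w| ∂μ := int_comp_add_smul μ hn c' h2
    _ = aveDiff μ f (c - c') := rfl


lemma unif_cont (g : H → ℝ) (hg : Continuous g) {ε : ℝ} (hε : 0 < ε) :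
    ∃ V ∈ 𝓝 (0 : H), ∀ δ ∈ V, ∀ w : H, |g (δ + w) - g w| < ε := by
  have hk : Continuous fun p : H × H => g (p.2 + p.1) - g p.1 :=
    (hg.comp (continuous_snd.add continuous_fst)).sub (hg.comp continuous_fst)
  have hopen : IsOpen {p : H × H | |g (p.2 + p.1) - g p.1| < ε} :=
    isOpen_lt hk.abs continuous_const
  have hsub : (Set.univ : Set H) ×ˢ ({0} : Set H)
      ⊆ {p : H × H | |g (p.2 + p.1) - g p.1| < ε} := by
    rintro ⟨w, δ⟩ ⟨-, hδ⟩
    simp only [Set.mem_singleton_iff] at hδ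
    simp [hδ, hε]
  obtain ⟨u, v, hu, hv, huu, hvv, huv⟩ :=
    generalized_tube_lemma isCompact_univ isCompact_singleton hopen hsub
  refine ⟨v, hv.mem_nhds (hvv rfl), fun δ hδ w => ?_⟩
  exact huv (show (w, δ) ∈ u ×ˢ v from ⟨huu (Set.mem_univ w), hδ⟩)

lemma tendsto_aveDiff {f : H → ℝ} (hm : Measurable f) (hb : ∀ x, |f x| ≤ 1) :
    Tendsto (aveDiff μ f) (𝓝 0) (𝓝 0) := by
  rw [NormedAddCommGroup.tendsto_nhds_zero]
  intro ε hε
  have hint : Integrable f μ := intBdd μ hm.aestronglyMeasurable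
    (fun x => by rw [Real.norm_eq_abs]; exact hb x)
  obtain ⟨g, hg, -⟩ := hint.exists_boundedContinuous_integral_sub_le
    (show (0:ℝ) < ε/4 by linarith)
  obtain ⟨V, hV, hVg⟩ := unif_cont (fun x => g x) g.continuous
    (show (0:ℝ) < ε/4 by linarith)
  filter_upwards [hV] with δ hδ
  -- integrability facts
  have hmg : Measurable fun x => g x := g.continuous.measurable
  have hfg : Integrable (fun w => |f w - g w|) μ := by
    refine intBdd μ ((hm.sub hmg).abs).aestronglyMeasurable
      (C := 1 + ‖g‖) fun x => ?_
    rw [Real.norm_eq_abs, abs_abs]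
    calc |f x - g x| ≤ |f x| + |g x| := abs_sub _ _
      _ ≤ 1 + ‖g‖ := add_le_add (hb x) (g.norm_coe_le_norm x)
  have hgf : Integrable (fun w => |g w - f w|) μ := by
    have : (fun w => |g w - f w|) = fun w => |f w - g w| := by
      funext w; rw [abs_sub_comm]
    rw [this]; exact hfg
  have hfgδ : Integrable (fun w => |f (δ + w) - g (δ + w)|) μ := by
    refine intBdd μ (((hm.comp (measurable_const_add δ)).sub
      (hmg.comp (measurable_const_add δ))).abs).aestronglyMeasurable
      (C := 1 + ‖g‖) fun x => ?_
    rw [Real.norm_eq_abs, abs_abs]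
    calc |f (δ + x) - g (δ + x)| ≤ |f (δ + x)| + |g (δ + x)| := abs_sub _ _
      _ ≤ 1 + ‖g‖ := add_le_add (hb _) (g.norm_coe_le_norm _)
  have hggδ : Integrable (fun w => |g (δ + w) - g w|) μ := by
    refine intBdd μ (((hmg.comp (measurable_const_add δ)).sub hmg).abs).aestronglyMeasurable
      (C := 2 * ‖g‖) fun x => ?_
    rw [Real.norm_eq_abs, abs_abs]
    calc |g (δ + x) - g x| ≤ |g (δ + x)| + |g x| := abs_sub _ _
      _ ≤ 2 * ‖g‖ := by
          have h1 := g.norm_coe_le_norm (δ + x)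
          have h2 := g.norm_coe_le_norm x
          rw [Real.norm_eq_abs] at h1 h2; linarith
  have hfδ : Integrable (fun w => |f (δ + w) - f w|) μ := by
    refine intBdd μ (((hm.comp (measurable_const_add δ)).sub hm).abs).aestronglyMeasurable
      (C := 2) fun x => ?_
    rw [Real.norm_eq_abs, abs_abs]
    calc |f (δ + x) - f x| ≤ |f (δ + x)| + |f x| := abs_sub _ _
      _ ≤ 2 := by have := hb (δ + x); have := hb x; linarith
  -- the three-term bound
  have key : aveDiff μ f δ ≤ ∫ w, (|f (δ + w) - g (δ + w)| + |g (δ + w) - g w|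
      + |g w - f w|) ∂μ := by
    have hAB : Integrable (fun w => |f (δ + w) - g (δ + w)| + |g (δ + w) - g w|) μ :=
      hfgδ.add hggδ
    have hABC : Integrable (fun w => |f (δ + w) - g (δ + w)| + |g (δ + w) - g w|
        + |g w - f w|) μ := hAB.add hgf
    refine integral_mono hfδ hABC fun w => ?_
    · calc |f (δ + w) - f w|
          ≤ |f (δ + w) - g (δ + w)| + |g (δ + w) - f w| := abs_sub_le _ _ _
        _ ≤ |f (δ + w) - g (δ + w)| + (|g (δ + w) - g w| + |g w - f w|) :=
            add_le_add_right (abs_sub_le _ _ _) _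
        _ = _ := by ring
  have e1 : ∫ w, |f (δ + w) - g (δ + w)| ∂μ = ∫ w, |f w - g w| ∂μ :=
    integral_add_left_eq_self (fun w => |f w - g w|) δ
  have e2 : ∫ w, |g (δ + w) - g w| ∂μ ≤ ε/4 := by
    calc ∫ w, |g (δ + w) - g w| ∂μ ≤ ∫ _, ε/4 ∂μ :=
          integral_mono hggδ (integrable_const _) fun w => (hVg δ hδ w).le
      _ = ε/4 := by simp
  have e3 : ∫ w, |g w - f w| ∂μ = ∫ w, |f w - g w| ∂μ := by
    congr 1; funext w; rw [abs_sub_comm]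
  have hgε : ∫ w, |f w - g w| ∂μ ≤ ε/4 := by
    simpa [Real.norm_eq_abs] using hg
  have : aveDiff μ f δ ≤ 3 * (ε/4) := by
    have hAB : Integrable (fun w => |f (δ + w) - g (δ + w)| + |g (δ + w) - g w|) μ :=
      hfgδ.add hggδ
    have i2 : ∫ w, (|f (δ + w) - g (δ + w)| + |g (δ + w) - g w|) + |g w - f w| ∂μ
        = (∫ w, |f (δ + w) - g (δ + w)| + |g (δ + w) - g w| ∂μ)
          + ∫ w, |g w - f w| ∂μ := integral_add hAB hgf
    have i1 : ∫ w, |f (δ + w) - g (δ + w)| + |g (δ + w) - g w| ∂μ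
        = (∫ w, |f (δ + w) - g (δ + w)| ∂μ) + ∫ w, |g (δ + w) - g w| ∂μ :=
      integral_add hfgδ hggδ
    have hsplit : ∫ w, (|f (δ + w) - g (δ + w)| + |g (δ + w) - g w|
        + |g w - f w|) ∂μ = ∫ w, |f (δ + w) - g (δ + w)| ∂μ
        + ∫ w, |g (δ + w) - g w| ∂μ + ∫ w, |g w - f w| ∂μ := by
      rw [i2, i1]
    rw [hsplit] at key
    rw [e1, e3] at key
    linarith
  rw [Real.norm_eq_abs, abs_of_nonneg (aveDiff_nonneg μ f δ)]
  linarith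


lemma abs_int_le (f : H → ℝ) : |∫ x, f x ∂μ| ≤ ∫ x, |f x| ∂μ := by
  simpa [Real.norm_eq_abs] using norm_integral_le_integral_norm (μ := μ) f

lemma prod3_diff {a b c a' b' c' : ℝ} (ha : |a| ≤ 1) (hb : |b| ≤ 1) (hc : |c| ≤ 1)
    (ha' : |a'| ≤ 1) (hb' : |b'| ≤ 1) (hc' : |c'| ≤ 1) :
    |a * b * c - a' * b' * c'| ≤ |a - a'| + |b - b'| + |c - c'| := by
  have e : a * b * c - a' * b' * c'
      = (a - a') * (b * c) + a' * ((b - b') * c) + (a' * b') * (c - c') := by ring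
  rw [e]
  have h1 : |(a - a') * (b * c)| ≤ |a - a'| := by
    rw [abs_mul]
    refine mul_le_of_le_one_right (abs_nonneg _) ?_
    rw [abs_mul]; exact mul_le_one₀ hb (abs_nonneg _) hc
  have h2 : |a' * ((b - b') * c)| ≤ |b - b'| := by
    rw [abs_mul, abs_mul]
    calc |a'| * (|b - b'| * |c|) ≤ 1 * (|b - b'| * 1) := by
          refine mul_le_mul ha' ?_ (by positivity) zero_le_one
          exact mul_le_mul_of_nonneg_left hc (abs_nonneg _)
      _ = |b - b'| := by ring
  have h3 : |(a' * b') * (c - c')| ≤ |c - c'| := by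
    rw [abs_mul]
    refine mul_le_of_le_one_left (abs_nonneg _) ?_
    rw [abs_mul]; exact mul_le_one₀ ha' (abs_nonneg _) hb'
  calc |(a - a') * (b * c) + a' * ((b - b') * c) + (a' * b') * (c - c')|
      ≤ |(a - a') * (b * c) + a' * ((b - b') * c)| + |(a' * b') * (c - c')| := abs_add_le _ _
    _ ≤ |(a - a') * (b * c)| + |a' * ((b - b') * c)| + |(a' * b') * (c - c')| :=
        add_le_add_left (abs_add_le _ _) _
    _ ≤ |a - a'| + |b - b'| + |c - c'| := by
        exact add_le_add (add_le_add h1 h2) h3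

/-- The basic triple correlation integral. -/
noncomputable def trip (f₁ f₂ f₃ : H → ℝ) (q₁ q₂ q₃ : ℤ) (c₁ c₂ c₃ : H) : ℝ :=
  ∫ v, f₁ (c₁ + q₁ • v) * f₂ (c₂ + q₂ • v) * f₃ (c₃ + q₃ • v) ∂μ

variable {f₁ f₂ f₃ g₁ g₂ g₃ : H → ℝ} {q₁ q₂ q₃ : ℤ}

lemma trip_meas (hm₁ : Measurable f₁) (hm₂ : Measurable f₂) (hm₃ : Measurable f₃)
    (c₁ c₂ c₃ : H) :
    Measurable fun v : H => f₁ (c₁ + q₁ • v) * f₂ (c₂ + q₂ • v) * f₃ (c₃ + q₃ • v) :=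
  ((meas_affine hm₁ c₁ q₁).mul (meas_affine hm₂ c₂ q₂)).mul (meas_affine hm₃ c₃ q₃)

lemma trip_int (hm₁ : Measurable f₁) (hm₂ : Measurable f₂) (hm₃ : Measurable f₃)
    (hb₁ : ∀ x, |f₁ x| ≤ 1) (hb₂ : ∀ x, |f₂ x| ≤ 1) (hb₃ : ∀ x, |f₃ x| ≤ 1)
    (c₁ c₂ c₃ : H) :
    Integrable (fun v : H => f₁ (c₁ + q₁ • v) * f₂ (c₂ + q₂ • v) * f₃ (c₃ + q₃ • v)) μ := by
  refine intBdd μ (trip_meas hm₁ hm₂ hm₃ c₁ c₂ c₃).aestronglyMeasurable (C := 1) fun x => ?_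
  rw [Real.norm_eq_abs, abs_mul, abs_mul]
  exact mul_le_one₀ (mul_le_one₀ (hb₁ _) (abs_nonneg _) (hb₂ _)) (abs_nonneg _) (hb₃ _)

lemma abs_trip_le_one (hm₁ : Measurable f₁) (hm₂ : Measurable f₂) (hm₃ : Measurable f₃)
    (hb₁ : ∀ x, |f₁ x| ≤ 1) (hb₂ : ∀ x, |f₂ x| ≤ 1) (hb₃ : ∀ x, |f₃ x| ≤ 1)
    (c₁ c₂ c₃ : H) : |trip μ f₁ f₂ f₃ q₁ q₂ q₃ c₁ c₂ c₃| ≤ 1 := by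
  unfold trip
  calc |∫ v, f₁ (c₁ + q₁ • v) * f₂ (c₂ + q₂ • v) * f₃ (c₃ + q₃ • v) ∂μ|
      ≤ ∫ v, |f₁ (c₁ + q₁ • v) * f₂ (c₂ + q₂ • v) * f₃ (c₃ + q₃ • v)| ∂μ :=
        abs_int_le μ _
    _ ≤ ∫ _, (1:ℝ) ∂μ := by
        refine integral_mono ((trip_int μ hm₁ hm₂ hm₃ hb₁ hb₂ hb₃ c₁ c₂ c₃).abs)
          (integrable_const _) fun v => ?_
        rw [abs_mul, abs_mul]
        exact mul_le_one₀ (mul_le_one₀ (hb₁ _) (abs_nonneg _) (hb₂ _)) (abs_nonneg _) (hb₃ _)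
    _ = 1 := by simp

lemma trip_sub_le (hm₁ : Measurable f₁) (hm₂ : Measurable f₂) (hm₃ : Measurable f₃)
    (hb₁ : ∀ x, |f₁ x| ≤ 1) (hb₂ : ∀ x, |f₂ x| ≤ 1) (hb₃ : ∀ x, |f₃ x| ≤ 1)
    (hq₁ : MeasurePreserving (fun x : H => q₁ • x) μ μ)
    (hq₂ : MeasurePreserving (fun x : H => q₂ • x) μ μ)
    (hq₃ : MeasurePreserving (fun x : H => q₃ • x) μ μ)
    (c₁ c₂ c₃ c₁' c₂' c₃' : H) :
    |trip μ f₁ f₂ f₃ q₁ q₂ q₃ c₁ c₂ c₃ - trip μ f₁ f₂ f₃ q₁ q₂ q₃ c₁' c₂' c₃'|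
      ≤ aveDiff μ f₁ (c₁ - c₁') + aveDiff μ f₂ (c₂ - c₂') + aveDiff μ f₃ (c₃ - c₃') := by
  have hint := trip_int μ hm₁ hm₂ hm₃ hb₁ hb₂ hb₃ (q₁ := q₁) (q₂ := q₂) (q₃ := q₃) c₁ c₂ c₃
  have hint' := trip_int μ hm₁ hm₂ hm₃ hb₁ hb₂ hb₃ (q₁ := q₁) (q₂ := q₂) (q₃ := q₃) c₁' c₂' c₃'
  have hd₁ : Integrable (fun v : H => |f₁ (c₁ + q₁ • v) - f₁ (c₁' + q₁ • v)|) μ := by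
    refine intBdd μ (((meas_affine hm₁ c₁ q₁).sub (meas_affine hm₁ c₁' q₁)).abs).aestronglyMeasurable
      (C := 2) fun x => ?_
    rw [Real.norm_eq_abs, abs_abs]
    calc |f₁ (c₁ + q₁ • x) - f₁ (c₁' + q₁ • x)| ≤ |f₁ (c₁ + q₁ • x)| + |f₁ (c₁' + q₁ • x)| :=
          abs_sub _ _
      _ ≤ 2 := by have := hb₁ (c₁ + q₁ • x); have := hb₁ (c₁' + q₁ • x); linarith
  have hd₂ : Integrable (fun v : H => |f₂ (c₂ + q₂ • v) - f₂ (c₂' + q₂ • v)|) μ := by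
    refine intBdd μ (((meas_affine hm₂ c₂ q₂).sub (meas_affine hm₂ c₂' q₂)).abs).aestronglyMeasurable
      (C := 2) fun x => ?_
    rw [Real.norm_eq_abs, abs_abs]
    calc |f₂ (c₂ + q₂ • x) - f₂ (c₂' + q₂ • x)| ≤ |f₂ (c₂ + q₂ • x)| + |f₂ (c₂' + q₂ • x)| :=
          abs_sub _ _
      _ ≤ 2 := by have := hb₂ (c₂ + q₂ • x); have := hb₂ (c₂' + q₂ • x); linarith
  have hd₃ : Integrable (fun v : H => |f₃ (c₃ + q₃ • v) - f₃ (c₃' + q₃ • v)|) μ := by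
    refine intBdd μ (((meas_affine hm₃ c₃ q₃).sub (meas_affine hm₃ c₃' q₃)).abs).aestronglyMeasurable
      (C := 2) fun x => ?_
    rw [Real.norm_eq_abs, abs_abs]
    calc |f₃ (c₃ + q₃ • x) - f₃ (c₃' + q₃ • x)| ≤ |f₃ (c₃ + q₃ • x)| + |f₃ (c₃' + q₃ • x)| :=
          abs_sub _ _
      _ ≤ 2 := by have := hb₃ (c₃ + q₃ • x); have := hb₃ (c₃' + q₃ • x); linarith
  have hd12 : Integrable (fun v : H => |f₁ (c₁ + q₁ • v) - f₁ (c₁' + q₁ • v)|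
      + |f₂ (c₂ + q₂ • v) - f₂ (c₂' + q₂ • v)|) μ := hd₁.add hd₂
  have hd123 : Integrable (fun v : H => |f₁ (c₁ + q₁ • v) - f₁ (c₁' + q₁ • v)|
      + |f₂ (c₂ + q₂ • v) - f₂ (c₂' + q₂ • v)|
      + |f₃ (c₃ + q₃ • v) - f₃ (c₃' + q₃ • v)|) μ := hd12.add hd₃
  have step1 : trip μ f₁ f₂ f₃ q₁ q₂ q₃ c₁ c₂ c₃ - trip μ f₁ f₂ f₃ q₁ q₂ q₃ c₁' c₂' c₃'
      = ∫ v, (f₁ (c₁ + q₁ • v) * f₂ (c₂ + q₂ • v) * f₃ (c₃ + q₃ • v)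
        - f₁ (c₁' + q₁ • v) * f₂ (c₂' + q₂ • v) * f₃ (c₃' + q₃ • v)) ∂μ :=
    (integral_sub hint hint').symm
  rw [step1]
  calc |∫ v, (f₁ (c₁ + q₁ • v) * f₂ (c₂ + q₂ • v) * f₃ (c₃ + q₃ • v)
        - f₁ (c₁' + q₁ • v) * f₂ (c₂' + q₂ • v) * f₃ (c₃' + q₃ • v)) ∂μ|
      ≤ ∫ v, |f₁ (c₁ + q₁ • v) * f₂ (c₂ + q₂ • v) * f₃ (c₃ + q₃ • v)
        - f₁ (c₁' + q₁ • v) * f₂ (c₂' + q₂ • v) * f₃ (c₃' + q₃ • v)| ∂μ :=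
        abs_int_le μ _
    _ ≤ ∫ v, (|f₁ (c₁ + q₁ • v) - f₁ (c₁' + q₁ • v)|
        + |f₂ (c₂ + q₂ • v) - f₂ (c₂' + q₂ • v)|
        + |f₃ (c₃ + q₃ • v) - f₃ (c₃' + q₃ • v)|) ∂μ := by
        refine integral_mono (hint.sub hint').abs hd123 fun v => ?_
        exact prod3_diff (hb₁ _) (hb₂ _) (hb₃ _) (hb₁ _) (hb₂ _) (hb₃ _)
    _ = aveDiff μ f₁ (c₁ - c₁') + aveDiff μ f₂ (c₂ - c₂') + aveDiff μ f₃ (c₃ - c₃') := by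
        rw [integral_add hd12 hd₃, integral_add hd₁ hd₂,
          int_abs_comp μ hq₁ c₁ c₁' hm₁, int_abs_comp μ hq₂ c₂ c₂' hm₂,
          int_abs_comp μ hq₃ c₃ c₃' hm₃]


lemma smul_sub_smul_eq (p : ℤ) (b t t₀ : H) : (b + p • t) - (b + p • t₀) = p • (t - t₀) := by
  rw [add_sub_add_left_eq_sub, ← smul_sub]

lemma trip_cont (hm₁ : Measurable f₁) (hm₂ : Measurable f₂) (hm₃ : Measurable f₃)
    (hb₁ : ∀ x, |f₁ x| ≤ 1) (hb₂ : ∀ x, |f₂ x| ≤ 1) (hb₃ : ∀ x, |f₃ x| ≤ 1)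
    (hq₁ : MeasurePreserving (fun x : H => q₁ • x) μ μ)
    (hq₂ : MeasurePreserving (fun x : H => q₂ • x) μ μ)
    (hq₃ : MeasurePreserving (fun x : H => q₃ • x) μ μ)
    (b₁ b₂ b₃ : H) (p₁ p₂ p₃ : ℤ) :
    Continuous fun t : H =>
      trip μ f₁ f₂ f₃ q₁ q₂ q₃ (b₁ + p₁ • t) (b₂ + p₂ • t) (b₃ + p₃ • t) := by
  rw [continuous_iff_continuousAt]
  intro t₀
  have hbnd : ∀ t : H, |trip μ f₁ f₂ f₃ q₁ q₂ q₃ (b₁ + p₁ • t) (b₂ + p₂ • t) (b₃ + p₃ • t)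
      - trip μ f₁ f₂ f₃ q₁ q₂ q₃ (b₁ + p₁ • t₀) (b₂ + p₂ • t₀) (b₃ + p₃ • t₀)|
      ≤ aveDiff μ f₁ (p₁ • (t - t₀)) + aveDiff μ f₂ (p₂ • (t - t₀))
        + aveDiff μ f₃ (p₃ • (t - t₀)) := by
    intro t
    have := trip_sub_le μ hm₁ hm₂ hm₃ hb₁ hb₂ hb₃ hq₁ hq₂ hq₃
      (b₁ + p₁ • t) (b₂ + p₂ • t) (b₃ + p₃ • t)
      (b₁ + p₁ • t₀) (b₂ + p₂ • t₀) (b₃ + p₃ • t₀)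
    rwa [smul_sub_smul_eq, smul_sub_smul_eq, smul_sub_smul_eq] at this
  have hz : ∀ p : ℤ, Tendsto (fun t : H => p • (t - t₀)) (𝓝 t₀) (𝓝 0) := by
    intro p
    have hc : Continuous fun t : H => p • (t - t₀) :=
      (continuous_zsmul p).comp (continuous_id.sub continuous_const)
    have := hc.tendsto t₀
    simpa using this
  have hT : Tendsto (fun t : H => aveDiff μ f₁ (p₁ • (t - t₀)) + aveDiff μ f₂ (p₂ • (t - t₀))
      + aveDiff μ f₃ (p₃ • (t - t₀))) (𝓝 t₀) (𝓝 0) := by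
    have h1 := (tendsto_aveDiff μ hm₁ hb₁).comp (hz p₁)
    have h2 := (tendsto_aveDiff μ hm₂ hb₂).comp (hz p₂)
    have h3 := (tendsto_aveDiff μ hm₃ hb₃).comp (hz p₃)
    have := (h1.add h2).add h3
    simpa using this
  have habs := squeeze_zero (fun t => abs_nonneg _) hbnd hT
  have : Tendsto (fun t : H =>
      trip μ f₁ f₂ f₃ q₁ q₂ q₃ (b₁ + p₁ • t) (b₂ + p₂ • t) (b₃ + p₃ • t)) (𝓝 t₀)
      (𝓝 (trip μ f₁ f₂ f₃ q₁ q₂ q₃ (b₁ + p₁ • t₀) (b₂ + p₂ • t₀) (b₃ + p₃ • t₀))) := by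
    rw [tendsto_iff_norm_sub_tendsto_zero]
    simpa [Real.norm_eq_abs] using habs
  exact this

lemma abs_mul3_le₁ {x b c : ℝ} (hb : |b| ≤ 1) (hc : |c| ≤ 1) : |x * b * c| ≤ |x| := by
  rw [abs_mul, abs_mul]
  calc |x| * |b| * |c| ≤ |x| * 1 * 1 := by
        refine mul_le_mul (mul_le_mul_of_nonneg_left hb (abs_nonneg _)) hc (abs_nonneg _) ?_
        positivity
    _ = |x| := by ring

lemma abs_mul3_le₂ {a x c : ℝ} (ha : |a| ≤ 1) (hc : |c| ≤ 1) : |a * x * c| ≤ |x| := by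
  rw [show a * x * c = x * a * c by ring]; exact abs_mul3_le₁ ha hc

lemma abs_mul3_le₃ {a b x : ℝ} (ha : |a| ≤ 1) (hb : |b| ≤ 1) : |a * b * x| ≤ |x| := by
  rw [show a * b * x = x * a * b by ring]; exact abs_mul3_le₁ ha hb

lemma abs_diff_int {f g : H → ℝ} (hf : Measurable f) (hg : Measurable g)
    (hbf : ∀ x, |f x| ≤ 1) (hbg : ∀ x, |g x| ≤ 1) (c : H) (q : ℤ) :
    Integrable (fun v : H => |f (c + q • v) - g (c + q • v)|) μ := by
  refine intBdd μ (((meas_affine hf c q).sub (meas_affine hg c q)).abs).aestronglyMeasurable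
    (C := 2) fun x => ?_
  rw [Real.norm_eq_abs, abs_abs]
  calc |f (c + q • x) - g (c + q • x)| ≤ |f (c + q • x)| + |g (c + q • x)| := abs_sub _ _
    _ ≤ 2 := by have := hbf (c + q • x); have := hbg (c + q • x); linarith

lemma trip_diff_slot1 (hm₁ : Measurable f₁) (hg₁ : Measurable g₁)
    (hm₂ : Measurable f₂) (hm₃ : Measurable f₃)
    (hb₁ : ∀ x, |f₁ x| ≤ 1) (hbg₁ : ∀ x, |g₁ x| ≤ 1)
    (hb₂ : ∀ x, |f₂ x| ≤ 1) (hb₃ : ∀ x, |f₃ x| ≤ 1)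
    (hq₁ : MeasurePreserving (fun x : H => q₁ • x) μ μ)
    (c₁ c₂ c₃ : H) :
    |trip μ f₁ f₂ f₃ q₁ q₂ q₃ c₁ c₂ c₃ - trip μ g₁ f₂ f₃ q₁ q₂ q₃ c₁ c₂ c₃|
      ≤ ∫ x, |f₁ x - g₁ x| ∂μ := by
  have e : trip μ f₁ f₂ f₃ q₁ q₂ q₃ c₁ c₂ c₃ - trip μ g₁ f₂ f₃ q₁ q₂ q₃ c₁ c₂ c₃
      = ∫ v, (f₁ (c₁ + q₁ • v) - g₁ (c₁ + q₁ • v)) * f₂ (c₂ + q₂ • v) * f₃ (c₃ + q₃ • v) ∂μ := by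
    unfold trip
    rw [← integral_sub (trip_int μ hm₁ hm₂ hm₃ hb₁ hb₂ hb₃ c₁ c₂ c₃)
      (trip_int μ hg₁ hm₂ hm₃ hbg₁ hb₂ hb₃ c₁ c₂ c₃)]
    congr 1; funext v; ring
  rw [e]
  have habs : AEStronglyMeasurable (fun x => |f₁ x - g₁ x|) μ :=
    ((hm₁.sub hg₁).abs).aestronglyMeasurable
  calc |∫ v, (f₁ (c₁ + q₁ • v) - g₁ (c₁ + q₁ • v)) * f₂ (c₂ + q₂ • v) * f₃ (c₃ + q₃ • v) ∂μ|
      ≤ ∫ v, |(f₁ (c₁ + q₁ • v) - g₁ (c₁ + q₁ • v)) * f₂ (c₂ + q₂ • v) * f₃ (c₃ + q₃ • v)| ∂μ :=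
        abs_int_le μ _
    _ ≤ ∫ v, |f₁ (c₁ + q₁ • v) - g₁ (c₁ + q₁ • v)| ∂μ := by
        refine integral_mono ?_ (abs_diff_int μ hm₁ hg₁ hb₁ hbg₁ c₁ q₁) fun v =>
          abs_mul3_le₁ (hb₂ _) (hb₃ _)
        refine (Integrable.abs ?_)
        refine intBdd μ ((((meas_affine hm₁ c₁ q₁).sub (meas_affine hg₁ c₁ q₁)).mul
          (meas_affine hm₂ c₂ q₂)).mul (meas_affine hm₃ c₃ q₃)).aestronglyMeasurable
          (C := 2) fun x => ?_
        rw [Real.norm_eq_abs]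
        calc |(f₁ (c₁ + q₁ • x) - g₁ (c₁ + q₁ • x)) * f₂ (c₂ + q₂ • x) * f₃ (c₃ + q₃ • x)|
            ≤ |f₁ (c₁ + q₁ • x) - g₁ (c₁ + q₁ • x)| := abs_mul3_le₁ (hb₂ _) (hb₃ _)
          _ ≤ 2 := by
              have h1 := hb₁ (c₁ + q₁ • x); have h2 := hbg₁ (c₁ + q₁ • x)
              have := abs_sub (f₁ (c₁ + q₁ • x)) (g₁ (c₁ + q₁ • x)); linarith
    _ = ∫ x, |f₁ x - g₁ x| ∂μ := int_comp_add_smul μ hq₁ c₁ habs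

lemma trip_diff_slot2 (hm₁ : Measurable f₁)
    (hm₂ : Measurable f₂) (hg₂ : Measurable g₂) (hm₃ : Measurable f₃)
    (hb₁ : ∀ x, |f₁ x| ≤ 1) (hb₂ : ∀ x, |f₂ x| ≤ 1) (hbg₂ : ∀ x, |g₂ x| ≤ 1)
    (hb₃ : ∀ x, |f₃ x| ≤ 1)
    (hq₂ : MeasurePreserving (fun x : H => q₂ • x) μ μ)
    (c₁ c₂ c₃ : H) :
    |trip μ f₁ f₂ f₃ q₁ q₂ q₃ c₁ c₂ c₃ - trip μ f₁ g₂ f₃ q₁ q₂ q₃ c₁ c₂ c₃|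
      ≤ ∫ x, |f₂ x - g₂ x| ∂μ := by
  have e : trip μ f₁ f₂ f₃ q₁ q₂ q₃ c₁ c₂ c₃ - trip μ f₁ g₂ f₃ q₁ q₂ q₃ c₁ c₂ c₃
      = ∫ v, f₁ (c₁ + q₁ • v) * (f₂ (c₂ + q₂ • v) - g₂ (c₂ + q₂ • v)) * f₃ (c₃ + q₃ • v) ∂μ := by
    unfold trip
    rw [← integral_sub (trip_int μ hm₁ hm₂ hm₃ hb₁ hb₂ hb₃ c₁ c₂ c₃)
      (trip_int μ hm₁ hg₂ hm₃ hb₁ hbg₂ hb₃ c₁ c₂ c₃)]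
    congr 1; funext v; ring
  rw [e]
  have habs : AEStronglyMeasurable (fun x => |f₂ x - g₂ x|) μ :=
    ((hm₂.sub hg₂).abs).aestronglyMeasurable
  calc |∫ v, f₁ (c₁ + q₁ • v) * (f₂ (c₂ + q₂ • v) - g₂ (c₂ + q₂ • v)) * f₃ (c₃ + q₃ • v) ∂μ|
      ≤ ∫ v, |f₁ (c₁ + q₁ • v) * (f₂ (c₂ + q₂ • v) - g₂ (c₂ + q₂ • v)) * f₃ (c₃ + q₃ • v)| ∂μ :=
        abs_int_le μ _
    _ ≤ ∫ v, |f₂ (c₂ + q₂ • v) - g₂ (c₂ + q₂ • v)| ∂μ := by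
        refine integral_mono ?_ (abs_diff_int μ hm₂ hg₂ hb₂ hbg₂ c₂ q₂) fun v =>
          abs_mul3_le₂ (hb₁ _) (hb₃ _)
        refine (Integrable.abs ?_)
        refine intBdd μ (((meas_affine hm₁ c₁ q₁).mul
          ((meas_affine hm₂ c₂ q₂).sub (meas_affine hg₂ c₂ q₂))).mul
          (meas_affine hm₃ c₃ q₃)).aestronglyMeasurable (C := 2) fun x => ?_
        rw [Real.norm_eq_abs]
        calc |f₁ (c₁ + q₁ • x) * (f₂ (c₂ + q₂ • x) - g₂ (c₂ + q₂ • x)) * f₃ (c₃ + q₃ • x)|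
            ≤ |f₂ (c₂ + q₂ • x) - g₂ (c₂ + q₂ • x)| := abs_mul3_le₂ (hb₁ _) (hb₃ _)
          _ ≤ 2 := by
              have h1 := hb₂ (c₂ + q₂ • x); have h2 := hbg₂ (c₂ + q₂ • x)
              have := abs_sub (f₂ (c₂ + q₂ • x)) (g₂ (c₂ + q₂ • x)); linarith
    _ = ∫ x, |f₂ x - g₂ x| ∂μ := int_comp_add_smul μ hq₂ c₂ habs

lemma trip_diff_slot3 (hm₁ : Measurable f₁) (hm₂ : Measurable f₂)
    (hm₃ : Measurable f₃) (hg₃ : Measurable g₃)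
    (hb₁ : ∀ x, |f₁ x| ≤ 1) (hb₂ : ∀ x, |f₂ x| ≤ 1)
    (hb₃ : ∀ x, |f₃ x| ≤ 1) (hbg₃ : ∀ x, |g₃ x| ≤ 1)
    (hq₃ : MeasurePreserving (fun x : H => q₃ • x) μ μ)
    (c₁ c₂ c₃ : H) :
    |trip μ f₁ f₂ f₃ q₁ q₂ q₃ c₁ c₂ c₃ - trip μ f₁ f₂ g₃ q₁ q₂ q₃ c₁ c₂ c₃|
      ≤ ∫ x, |f₃ x - g₃ x| ∂μ := by
  have e : trip μ f₁ f₂ f₃ q₁ q₂ q₃ c₁ c₂ c₃ - trip μ f₁ f₂ g₃ q₁ q₂ q₃ c₁ c₂ c₃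
      = ∫ v, f₁ (c₁ + q₁ • v) * f₂ (c₂ + q₂ • v) * (f₃ (c₃ + q₃ • v) - g₃ (c₃ + q₃ • v)) ∂μ := by
    unfold trip
    rw [← integral_sub (trip_int μ hm₁ hm₂ hm₃ hb₁ hb₂ hb₃ c₁ c₂ c₃)
      (trip_int μ hm₁ hm₂ hg₃ hb₁ hb₂ hbg₃ c₁ c₂ c₃)]
    congr 1; funext v; ring
  rw [e]
  have habs : AEStronglyMeasurable (fun x => |f₃ x - g₃ x|) μ :=
    ((hm₃.sub hg₃).abs).aestronglyMeasurable
  calc |∫ v, f₁ (c₁ + q₁ • v) * f₂ (c₂ + q₂ • v) * (f₃ (c₃ + q₃ • v) - g₃ (c₃ + q₃ • v)) ∂μ|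
      ≤ ∫ v, |f₁ (c₁ + q₁ • v) * f₂ (c₂ + q₂ • v) * (f₃ (c₃ + q₃ • v) - g₃ (c₃ + q₃ • v))| ∂μ :=
        abs_int_le μ _
    _ ≤ ∫ v, |f₃ (c₃ + q₃ • v) - g₃ (c₃ + q₃ • v)| ∂μ := by
        refine integral_mono ?_ (abs_diff_int μ hm₃ hg₃ hb₃ hbg₃ c₃ q₃) fun v =>
          abs_mul3_le₃ (hb₁ _) (hb₂ _)
        refine (Integrable.abs ?_)
        refine intBdd μ (((meas_affine hm₁ c₁ q₁).mul (meas_affine hm₂ c₂ q₂)).mul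
          ((meas_affine hm₃ c₃ q₃).sub (meas_affine hg₃ c₃ q₃))).aestronglyMeasurable
          (C := 2) fun x => ?_
        rw [Real.norm_eq_abs]
        calc |f₁ (c₁ + q₁ • x) * f₂ (c₂ + q₂ • x) * (f₃ (c₃ + q₃ • x) - g₃ (c₃ + q₃ • x))|
            ≤ |f₃ (c₃ + q₃ • x) - g₃ (c₃ + q₃ • x)| := abs_mul3_le₃ (hb₁ _) (hb₂ _)
          _ ≤ 2 := by
              have h1 := hb₃ (c₃ + q₃ • x); have h2 := hbg₃ (c₃ + q₃ • x)
              have := abs_sub (f₃ (c₃ + q₃ • x)) (g₃ (c₃ + q₃ • x)); linarith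
    _ = ∫ x, |f₃ x - g₃ x| ∂μ := int_comp_add_smul μ hq₃ c₃ habs


section DD

variable (a₁ a₂ a₃ : ℤ)

/-- the double inner integral -/
noncomputable def DD (f₁ f₂ f₃ : H → ℝ) (h : H) : ℝ :=
  ∫ u, trip μ f₁ f₂ f₃ (a₁^2) (a₂^2) (a₃^2) (h + a₁ • u) (h + a₂ • u) (h + a₃ • u) ∂μ

variable {f₁ f₂ f₃ g₁ g₂ g₃ : H → ℝ}

lemma zeta_cont (hq₁ : MeasurePreserving (fun x : H => (a₁^2) • x) μ μ)
    (hq₂ : MeasurePreserving (fun x : H => (a₂^2) • x) μ μ)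
    (hq₃ : MeasurePreserving (fun x : H => (a₃^2) • x) μ μ)
    (hm₁ : Measurable f₁) (hm₂ : Measurable f₂) (hm₃ : Measurable f₃)
    (hb₁ : ∀ x, |f₁ x| ≤ 1) (hb₂ : ∀ x, |f₂ x| ≤ 1) (hb₃ : ∀ x, |f₃ x| ≤ 1) (h : H) :
    Continuous fun u : H =>
      trip μ f₁ f₂ f₃ (a₁^2) (a₂^2) (a₃^2) (h + a₁ • u) (h + a₂ • u) (h + a₃ • u) :=
  trip_cont μ hm₁ hm₂ hm₃ hb₁ hb₂ hb₃ hq₁ hq₂ hq₃ h h h a₁ a₂ a₃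

lemma zeta_int (hq₁ : MeasurePreserving (fun x : H => (a₁^2) • x) μ μ)
    (hq₂ : MeasurePreserving (fun x : H => (a₂^2) • x) μ μ)
    (hq₃ : MeasurePreserving (fun x : H => (a₃^2) • x) μ μ)
    (hm₁ : Measurable f₁) (hm₂ : Measurable f₂) (hm₃ : Measurable f₃)
    (hb₁ : ∀ x, |f₁ x| ≤ 1) (hb₂ : ∀ x, |f₂ x| ≤ 1) (hb₃ : ∀ x, |f₃ x| ≤ 1) (h : H) :
    Integrable (fun u : H =>
      trip μ f₁ f₂ f₃ (a₁^2) (a₂^2) (a₃^2) (h + a₁ • u) (h + a₂ • u) (h + a₃ • u)) μ := by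
  refine intBdd μ (zeta_cont μ a₁ a₂ a₃ hq₁ hq₂ hq₃ hm₁ hm₂ hm₃ hb₁ hb₂
    hb₃ h).aestronglyMeasurable (C := 1) fun u => ?_
  rw [Real.norm_eq_abs]
  exact abs_trip_le_one μ hm₁ hm₂ hm₃ hb₁ hb₂ hb₃ _ _ _

lemma abs_DD_le_one (hq₁ : MeasurePreserving (fun x : H => (a₁^2) • x) μ μ)
    (hq₂ : MeasurePreserving (fun x : H => (a₂^2) • x) μ μ)
    (hq₃ : MeasurePreserving (fun x : H => (a₃^2) • x) μ μ)
    (hm₁ : Measurable f₁) (hm₂ : Measurable f₂) (hm₃ : Measurable f₃)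
    (hb₁ : ∀ x, |f₁ x| ≤ 1) (hb₂ : ∀ x, |f₂ x| ≤ 1) (hb₃ : ∀ x, |f₃ x| ≤ 1) (h : H) :
    |DD μ a₁ a₂ a₃ f₁ f₂ f₃ h| ≤ 1 := by
  unfold DD
  calc |∫ u, trip μ f₁ f₂ f₃ (a₁^2) (a₂^2) (a₃^2) (h + a₁ • u) (h + a₂ • u) (h + a₃ • u) ∂μ|
      ≤ ∫ u, |trip μ f₁ f₂ f₃ (a₁^2) (a₂^2) (a₃^2) (h + a₁ • u) (h + a₂ • u) (h + a₃ • u)| ∂μ :=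
        abs_int_le μ _
    _ ≤ ∫ _, (1:ℝ) ∂μ :=
        integral_mono (zeta_int μ a₁ a₂ a₃ hq₁ hq₂ hq₃ hm₁ hm₂ hm₃ hb₁ hb₂ hb₃ h).abs
          (integrable_const _) fun u => abs_trip_le_one μ hm₁ hm₂ hm₃ hb₁ hb₂ hb₃ _ _ _
    _ = 1 := by simp

lemma DD_cont (hq₁ : MeasurePreserving (fun x : H => (a₁^2) • x) μ μ)
    (hq₂ : MeasurePreserving (fun x : H => (a₂^2) • x) μ μ)
    (hq₃ : MeasurePreserving (fun x : H => (a₃^2) • x) μ μ)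
    (hm₁ : Measurable f₁) (hm₂ : Measurable f₂) (hm₃ : Measurable f₃)
    (hb₁ : ∀ x, |f₁ x| ≤ 1) (hb₂ : ∀ x, |f₂ x| ≤ 1) (hb₃ : ∀ x, |f₃ x| ≤ 1) :
    Continuous (DD μ a₁ a₂ a₃ f₁ f₂ f₃) := by
  rw [continuous_iff_continuousAt]
  intro h₀
  have hbnd : ∀ h : H, |DD μ a₁ a₂ a₃ f₁ f₂ f₃ h - DD μ a₁ a₂ a₃ f₁ f₂ f₃ h₀|
      ≤ aveDiff μ f₁ (h - h₀) + aveDiff μ f₂ (h - h₀) + aveDiff μ f₃ (h - h₀) := by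
    intro h
    have e : DD μ a₁ a₂ a₃ f₁ f₂ f₃ h - DD μ a₁ a₂ a₃ f₁ f₂ f₃ h₀
        = ∫ u, (trip μ f₁ f₂ f₃ (a₁^2) (a₂^2) (a₃^2) (h + a₁ • u) (h + a₂ • u) (h + a₃ • u)
          - trip μ f₁ f₂ f₃ (a₁^2) (a₂^2) (a₃^2) (h₀ + a₁ • u) (h₀ + a₂ • u) (h₀ + a₃ • u)) ∂μ :=
      (integral_sub (zeta_int μ a₁ a₂ a₃ hq₁ hq₂ hq₃ hm₁ hm₂ hm₃ hb₁ hb₂ hb₃ h)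
        (zeta_int μ a₁ a₂ a₃ hq₁ hq₂ hq₃ hm₁ hm₂ hm₃ hb₁ hb₂ hb₃ h₀)).symm
    rw [e]
    have hptw : ∀ u : H,
        |trip μ f₁ f₂ f₃ (a₁^2) (a₂^2) (a₃^2) (h + a₁ • u) (h + a₂ • u) (h + a₃ • u)
          - trip μ f₁ f₂ f₃ (a₁^2) (a₂^2) (a₃^2) (h₀ + a₁ • u) (h₀ + a₂ • u) (h₀ + a₃ • u)|
        ≤ aveDiff μ f₁ (h - h₀) + aveDiff μ f₂ (h - h₀) + aveDiff μ f₃ (h - h₀) := by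
      intro u
      have := trip_sub_le μ hm₁ hm₂ hm₃ hb₁ hb₂ hb₃ hq₁ hq₂ hq₃
        (h + a₁ • u) (h + a₂ • u) (h + a₃ • u) (h₀ + a₁ • u) (h₀ + a₂ • u) (h₀ + a₃ • u)
      rwa [add_sub_add_right_eq_sub, add_sub_add_right_eq_sub, add_sub_add_right_eq_sub] at this
    calc |∫ u, (trip μ f₁ f₂ f₃ (a₁^2) (a₂^2) (a₃^2) (h + a₁ • u) (h + a₂ • u) (h + a₃ • u)
          - trip μ f₁ f₂ f₃ (a₁^2) (a₂^2) (a₃^2) (h₀ + a₁ • u) (h₀ + a₂ • u) (h₀ + a₃ • u)) ∂μ|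
        ≤ ∫ u, |trip μ f₁ f₂ f₃ (a₁^2) (a₂^2) (a₃^2) (h + a₁ • u) (h + a₂ • u) (h + a₃ • u)
          - trip μ f₁ f₂ f₃ (a₁^2) (a₂^2) (a₃^2) (h₀ + a₁ • u) (h₀ + a₂ • u) (h₀ + a₃ • u)| ∂μ :=
          abs_int_le μ _
      _ ≤ ∫ _, (aveDiff μ f₁ (h - h₀) + aveDiff μ f₂ (h - h₀) + aveDiff μ f₃ (h - h₀)) ∂μ :=
          integral_mono (((zeta_int μ a₁ a₂ a₃ hq₁ hq₂ hq₃ hm₁ hm₂ hm₃ hb₁ hb₂ hb₃ h).sub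
            (zeta_int μ a₁ a₂ a₃ hq₁ hq₂ hq₃ hm₁ hm₂ hm₃ hb₁ hb₂ hb₃ h₀)).abs)
            (integrable_const _) hptw
      _ = aveDiff μ f₁ (h - h₀) + aveDiff μ f₂ (h - h₀) + aveDiff μ f₃ (h - h₀) := by simp
  have hz : Tendsto (fun h : H => h - h₀) (𝓝 h₀) (𝓝 0) := by
    have hc : Continuous fun h : H => h - h₀ := continuous_id.sub continuous_const
    have := hc.tendsto h₀
    simpa using this
  have hT : Tendsto (fun h : H => aveDiff μ f₁ (h - h₀) + aveDiff μ f₂ (h - h₀)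
      + aveDiff μ f₃ (h - h₀)) (𝓝 h₀) (𝓝 0) := by
    have h1 := (tendsto_aveDiff μ hm₁ hb₁).comp hz
    have h2 := (tendsto_aveDiff μ hm₂ hb₂).comp hz
    have h3 := (tendsto_aveDiff μ hm₃ hb₃).comp hz
    have := (h1.add h2).add h3
    simpa using this
  have habs := squeeze_zero (fun h => abs_nonneg _) hbnd hT
  have : Tendsto (DD μ a₁ a₂ a₃ f₁ f₂ f₃) (𝓝 h₀) (𝓝 (DD μ a₁ a₂ a₃ f₁ f₂ f₃ h₀)) := by
    rw [tendsto_iff_norm_sub_tendsto_zero]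
    simpa [Real.norm_eq_abs] using habs
  exact this

lemma DD_diff_slot1 (hq₁ : MeasurePreserving (fun x : H => (a₁^2) • x) μ μ)
    (hq₂ : MeasurePreserving (fun x : H => (a₂^2) • x) μ μ)
    (hq₃ : MeasurePreserving (fun x : H => (a₃^2) • x) μ μ)
    (hm₁ : Measurable f₁) (hg₁ : Measurable g₁)
    (hm₂ : Measurable f₂) (hm₃ : Measurable f₃)
    (hb₁ : ∀ x, |f₁ x| ≤ 1) (hbg₁ : ∀ x, |g₁ x| ≤ 1)
    (hb₂ : ∀ x, |f₂ x| ≤ 1) (hb₃ : ∀ x, |f₃ x| ≤ 1) (h : H) :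
    |DD μ a₁ a₂ a₃ f₁ f₂ f₃ h - DD μ a₁ a₂ a₃ g₁ f₂ f₃ h| ≤ ∫ x, |f₁ x - g₁ x| ∂μ := by
  have e : DD μ a₁ a₂ a₃ f₁ f₂ f₃ h - DD μ a₁ a₂ a₃ g₁ f₂ f₃ h
      = ∫ u, (trip μ f₁ f₂ f₃ (a₁^2) (a₂^2) (a₃^2) (h + a₁ • u) (h + a₂ • u) (h + a₃ • u)
        - trip μ g₁ f₂ f₃ (a₁^2) (a₂^2) (a₃^2) (h + a₁ • u) (h + a₂ • u) (h + a₃ • u)) ∂μ :=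
    (integral_sub (zeta_int μ a₁ a₂ a₃ hq₁ hq₂ hq₃ hm₁ hm₂ hm₃ hb₁ hb₂ hb₃ h)
      (zeta_int μ a₁ a₂ a₃ hq₁ hq₂ hq₃ hg₁ hm₂ hm₃ hbg₁ hb₂ hb₃ h)).symm
  rw [e]
  calc |∫ u, (trip μ f₁ f₂ f₃ (a₁^2) (a₂^2) (a₃^2) (h + a₁ • u) (h + a₂ • u) (h + a₃ • u)
        - trip μ g₁ f₂ f₃ (a₁^2) (a₂^2) (a₃^2) (h + a₁ • u) (h + a₂ • u) (h + a₃ • u)) ∂μ|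
      ≤ ∫ u, |trip μ f₁ f₂ f₃ (a₁^2) (a₂^2) (a₃^2) (h + a₁ • u) (h + a₂ • u) (h + a₃ • u)
        - trip μ g₁ f₂ f₃ (a₁^2) (a₂^2) (a₃^2) (h + a₁ • u) (h + a₂ • u) (h + a₃ • u)| ∂μ :=
        abs_int_le μ _
    _ ≤ ∫ _, (∫ x, |f₁ x - g₁ x| ∂μ) ∂μ :=
        integral_mono (((zeta_int μ a₁ a₂ a₃ hq₁ hq₂ hq₃ hm₁ hm₂ hm₃ hb₁ hb₂ hb₃ h).sub
          (zeta_int μ a₁ a₂ a₃ hq₁ hq₂ hq₃ hg₁ hm₂ hm₃ hbg₁ hb₂ hb₃ h)).abs)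
          (integrable_const _) fun u =>
          trip_diff_slot1 μ hm₁ hg₁ hm₂ hm₃ hb₁ hbg₁ hb₂ hb₃ hq₁ _ _ _
    _ = ∫ x, |f₁ x - g₁ x| ∂μ := by simp

lemma DD_diff_slot2 (hq₁ : MeasurePreserving (fun x : H => (a₁^2) • x) μ μ)
    (hq₂ : MeasurePreserving (fun x : H => (a₂^2) • x) μ μ)
    (hq₃ : MeasurePreserving (fun x : H => (a₃^2) • x) μ μ)
    (hm₁ : Measurable f₁)
    (hm₂ : Measurable f₂) (hg₂ : Measurable g₂) (hm₃ : Measurable f₃)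
    (hb₁ : ∀ x, |f₁ x| ≤ 1) (hb₂ : ∀ x, |f₂ x| ≤ 1) (hbg₂ : ∀ x, |g₂ x| ≤ 1)
    (hb₃ : ∀ x, |f₃ x| ≤ 1) (h : H) :
    |DD μ a₁ a₂ a₃ f₁ f₂ f₃ h - DD μ a₁ a₂ a₃ f₁ g₂ f₃ h| ≤ ∫ x, |f₂ x - g₂ x| ∂μ := by
  have e : DD μ a₁ a₂ a₃ f₁ f₂ f₃ h - DD μ a₁ a₂ a₃ f₁ g₂ f₃ h
      = ∫ u, (trip μ f₁ f₂ f₃ (a₁^2) (a₂^2) (a₃^2) (h + a₁ • u) (h + a₂ • u) (h + a₃ • u)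
        - trip μ f₁ g₂ f₃ (a₁^2) (a₂^2) (a₃^2) (h + a₁ • u) (h + a₂ • u) (h + a₃ • u)) ∂μ :=
    (integral_sub (zeta_int μ a₁ a₂ a₃ hq₁ hq₂ hq₃ hm₁ hm₂ hm₃ hb₁ hb₂ hb₃ h)
      (zeta_int μ a₁ a₂ a₃ hq₁ hq₂ hq₃ hm₁ hg₂ hm₃ hb₁ hbg₂ hb₃ h)).symm
  rw [e]
  calc |∫ u, (trip μ f₁ f₂ f₃ (a₁^2) (a₂^2) (a₃^2) (h + a₁ • u) (h + a₂ • u) (h + a₃ • u)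
        - trip μ f₁ g₂ f₃ (a₁^2) (a₂^2) (a₃^2) (h + a₁ • u) (h + a₂ • u) (h + a₃ • u)) ∂μ|
      ≤ ∫ u, |trip μ f₁ f₂ f₃ (a₁^2) (a₂^2) (a₃^2) (h + a₁ • u) (h + a₂ • u) (h + a₃ • u)
        - trip μ f₁ g₂ f₃ (a₁^2) (a₂^2) (a₃^2) (h + a₁ • u) (h + a₂ • u) (h + a₃ • u)| ∂μ :=
        abs_int_le μ _
    _ ≤ ∫ _, (∫ x, |f₂ x - g₂ x| ∂μ) ∂μ :=
        integral_mono (((zeta_int μ a₁ a₂ a₃ hq₁ hq₂ hq₃ hm₁ hm₂ hm₃ hb₁ hb₂ hb₃ h).sub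
          (zeta_int μ a₁ a₂ a₃ hq₁ hq₂ hq₃ hm₁ hg₂ hm₃ hb₁ hbg₂ hb₃ h)).abs)
          (integrable_const _) fun u =>
          trip_diff_slot2 μ hm₁ hm₂ hg₂ hm₃ hb₁ hb₂ hbg₂ hb₃ hq₂ _ _ _
    _ = ∫ x, |f₂ x - g₂ x| ∂μ := by simp

lemma DD_diff_slot3 (hq₁ : MeasurePreserving (fun x : H => (a₁^2) • x) μ μ)
    (hq₂ : MeasurePreserving (fun x : H => (a₂^2) • x) μ μ)
    (hq₃ : MeasurePreserving (fun x : H => (a₃^2) • x) μ μ)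
    (hm₁ : Measurable f₁) (hm₂ : Measurable f₂)
    (hm₃ : Measurable f₃) (hg₃ : Measurable g₃)
    (hb₁ : ∀ x, |f₁ x| ≤ 1) (hb₂ : ∀ x, |f₂ x| ≤ 1)
    (hb₃ : ∀ x, |f₃ x| ≤ 1) (hbg₃ : ∀ x, |g₃ x| ≤ 1) (h : H) :
    |DD μ a₁ a₂ a₃ f₁ f₂ f₃ h - DD μ a₁ a₂ a₃ f₁ f₂ g₃ h| ≤ ∫ x, |f₃ x - g₃ x| ∂μ := by
  have e : DD μ a₁ a₂ a₃ f₁ f₂ f₃ h - DD μ a₁ a₂ a₃ f₁ f₂ g₃ h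
      = ∫ u, (trip μ f₁ f₂ f₃ (a₁^2) (a₂^2) (a₃^2) (h + a₁ • u) (h + a₂ • u) (h + a₃ • u)
        - trip μ f₁ f₂ g₃ (a₁^2) (a₂^2) (a₃^2) (h + a₁ • u) (h + a₂ • u) (h + a₃ • u)) ∂μ :=
    (integral_sub (zeta_int μ a₁ a₂ a₃ hq₁ hq₂ hq₃ hm₁ hm₂ hm₃ hb₁ hb₂ hb₃ h)
      (zeta_int μ a₁ a₂ a₃ hq₁ hq₂ hq₃ hm₁ hm₂ hg₃ hb₁ hb₂ hbg₃ h)).symm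
  rw [e]
  calc |∫ u, (trip μ f₁ f₂ f₃ (a₁^2) (a₂^2) (a₃^2) (h + a₁ • u) (h + a₂ • u) (h + a₃ • u)
        - trip μ f₁ f₂ g₃ (a₁^2) (a₂^2) (a₃^2) (h + a₁ • u) (h + a₂ • u) (h + a₃ • u)) ∂μ|
      ≤ ∫ u, |trip μ f₁ f₂ f₃ (a₁^2) (a₂^2) (a₃^2) (h + a₁ • u) (h + a₂ • u) (h + a₃ • u)
        - trip μ f₁ f₂ g₃ (a₁^2) (a₂^2) (a₃^2) (h + a₁ • u) (h + a₂ • u) (h + a₃ • u)| ∂μ :=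
        abs_int_le μ _
    _ ≤ ∫ _, (∫ x, |f₃ x - g₃ x| ∂μ) ∂μ :=
        integral_mono (((zeta_int μ a₁ a₂ a₃ hq₁ hq₂ hq₃ hm₁ hm₂ hm₃ hb₁ hb₂ hb₃ h).sub
          (zeta_int μ a₁ a₂ a₃ hq₁ hq₂ hq₃ hm₁ hm₂ hg₃ hb₁ hb₂ hbg₃ h)).abs)
          (integrable_const _) fun u =>
          trip_diff_slot3 μ hm₁ hm₂ hm₃ hg₃ hb₁ hb₂ hb₃ hbg₃ hq₃ _ _ _
    _ = ∫ x, |f₃ x - g₃ x| ∂μ := by simp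

end DD


section Key

lemma int_congr {f g : H → ℝ} (h : ∀ x, f x = g x) : ∫ x, f x ∂μ = ∫ x, g x ∂μ := by
  congr 1; funext x; exact h x

lemma swapC {f : H → H → ℝ} (hf : Continuous (uncurry f)) :
    ∫ x, ∫ y, f x y ∂μ ∂μ = ∫ y, ∫ x, f x y ∂μ ∂μ :=
  integral_integral_swap_of_hasCompactSupport hf (HasCompactSupport.of_compactSpace _)

lemma paramC {f : H → H → ℝ} (hf : Continuous (uncurry f)) :
    Continuous fun x => ∫ y, f x y ∂μ := by
  rw [← continuousOn_univ]
  exact continuousOn_integral_of_compact_support isCompact_univ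
    hf.continuousOn (fun p x _ hx => absurd (Set.mem_univ x) hx)

lemma contInt {f : H → ℝ} (hf : Continuous f) : Integrable f μ :=
  hf.integrable_of_hasCompactSupport (HasCompactSupport.of_compactSpace _)

/-- cross-correlation -/
noncomputable def crossCor (G₁ G₂ : H → ℝ) (z : H) : ℝ := ∫ x, G₁ x * G₂ (z + x) ∂μ

variable {G₁ G₂ G₃ : H → ℝ}

lemma crossCor_cont (h₁ : Continuous G₁) (h₂ : Continuous G₂) :
    Continuous (crossCor μ G₁ G₂) := by
  apply paramC μ (f := fun z x => G₁ x * G₂ (z + x))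
  exact (h₁.comp continuous_snd).mul (h₂.comp (continuous_fst.add continuous_snd))

lemma keyL1 (h₁ : Continuous G₁) (h₂ : Continuous G₂) (h₃ : Continuous G₃) :
    ∫ s, (∫ x, G₁ x * G₂ (s + x) ∂μ) * G₃ s ∂μ
      = ∫ x, G₁ x * (∫ y, G₂ y * G₃ (y - x) ∂μ) ∂μ := by
  have c1 : Continuous (uncurry fun s x => (G₁ x * G₂ (s + x)) * G₃ s) :=
    ((h₁.comp continuous_snd).mul (h₂.comp (continuous_fst.add continuous_snd))).mul
      (h₃.comp continuous_fst)
  calc ∫ s, (∫ x, G₁ x * G₂ (s + x) ∂μ) * G₃ s ∂μ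
      = ∫ s, ∫ x, (G₁ x * G₂ (s + x)) * G₃ s ∂μ ∂μ := by
        refine int_congr μ fun s => ?_
        exact (integral_mul_const (G₃ s) fun x => G₁ x * G₂ (s + x)).symm
    _ = ∫ x, ∫ s, (G₁ x * G₂ (s + x)) * G₃ s ∂μ ∂μ := swapC μ c1
    _ = ∫ x, G₁ x * (∫ s, G₂ (s + x) * G₃ s ∂μ) ∂μ := by
        refine int_congr μ fun x => ?_
        rw [← integral_const_mul (G₁ x) fun s => G₂ (s + x) * G₃ s]
        refine int_congr μ fun s => ?_
        ring
    _ = ∫ x, G₁ x * (∫ y, G₂ y * G₃ (y - x) ∂μ) ∂μ := by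
        refine int_congr μ fun x => ?_
        congr 1
        have := integral_add_right_eq_self (μ := μ) (fun y => G₂ y * G₃ (y - x)) x
        rw [← this]
        refine int_congr μ fun s => ?_
        rw [add_sub_cancel_right]

lemma keyL2 (hφ : Continuous G₁) (hψ : Continuous G₂) :
    ∫ z, (crossCor μ G₁ G₂ z) ^ 2 ∂μ
      = ∫ x, G₁ x * (∫ y, G₁ y * crossCor μ G₂ G₂ (y - x) ∂μ) ∂μ := by
  have hg : Continuous (crossCor μ G₁ G₂) := crossCor_cont μ hφ hψ
  have step1 : ∫ z, (crossCor μ G₁ G₂ z) ^ 2 ∂μ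
      = ∫ x, G₁ x * (∫ y, G₂ y * crossCor μ G₁ G₂ (y - x) ∂μ) ∂μ := by
    have : ∀ z : H, (crossCor μ G₁ G₂ z) ^ 2
        = (∫ x, G₁ x * G₂ (z + x) ∂μ) * crossCor μ G₁ G₂ z := by
      intro z; rw [sq]; rfl
    rw [int_congr μ this]
    exact keyL1 μ hφ hψ hg
  rw [step1]
  refine int_congr μ fun x => ?_
  congr 1
  -- inner: ∫ y, G₂ y * crossCor G₁ G₂ (y - x) = ∫ w, G₁ w * crossCor G₂ G₂ (w - x)
  have c2 : Continuous (uncurry fun y w => G₂ y * (G₁ w * G₂ (y - x + w))) :=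
    (hψ.comp continuous_fst).mul ((hφ.comp continuous_snd).mul
      (hψ.comp (((continuous_fst.sub continuous_const)).add continuous_snd)))
  calc ∫ y, G₂ y * crossCor μ G₁ G₂ (y - x) ∂μ
      = ∫ y, ∫ w, G₂ y * (G₁ w * G₂ ((y - x) + w)) ∂μ ∂μ := by
        refine int_congr μ fun y => ?_
        simp only [crossCor]
        exact (integral_const_mul (G₂ y) fun w => G₁ w * G₂ ((y - x) + w)).symm
    _ = ∫ w, ∫ y, G₂ y * (G₁ w * G₂ ((y - x) + w)) ∂μ ∂μ := swapC μ c2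
    _ = ∫ w, G₁ w * (∫ y, G₂ y * G₂ ((w - x) + y) ∂μ) ∂μ := by
        refine int_congr μ fun w => ?_
        rw [← integral_const_mul (G₁ w) fun y => G₂ y * G₂ ((w - x) + y)]
        refine int_congr μ fun y => ?_
        have e : (y - x) + w = (w - x) + y := by abel
        rw [e]; ring
    _ = ∫ y, G₁ y * crossCor μ G₂ G₂ (y - x) ∂μ := rfl

lemma keyJensen {g : H → ℝ} (hg : Continuous g) :
    (∫ z, g z ∂μ) ^ 2 ≤ ∫ z, (g z) ^ 2 ∂μ := by
  have hgi : Integrable g μ := contInt μ hg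
  have hg2i : Integrable (fun z => (g z) ^ 2) μ := contInt μ (hg.pow 2)
  set c := ∫ z, g z ∂μ with hc
  have e : ∀ z : H, (g z - c) ^ 2 = (g z) ^ 2 - (2 * c) * g z + c ^ 2 := fun z => by ring
  have h0 : 0 ≤ ∫ z, ((g z) ^ 2 - (2 * c) * g z + c ^ 2) ∂μ := by
    rw [← int_congr μ e]
    exact integral_nonneg fun z => sq_nonneg _
  have hsub : Integrable (fun z => (g z) ^ 2 - (2 * c) * g z) μ :=
    hg2i.sub (hgi.const_mul (2 * c))
  have i1 : ∫ z, ((g z) ^ 2 - (2 * c) * g z + c ^ 2) ∂μ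
      = (∫ z, ((g z) ^ 2 - (2 * c) * g z) ∂μ) + ∫ _, c ^ 2 ∂μ :=
    integral_add hsub (integrable_const _)
  have i2 : ∫ z, ((g z) ^ 2 - (2 * c) * g z) ∂μ
      = (∫ z, (g z) ^ 2 ∂μ) - ∫ z, (2 * c) * g z ∂μ :=
    integral_sub hg2i (hgi.const_mul (2 * c))
  have i3 : ∫ z, (2 * c) * g z ∂μ = (2 * c) * c := by
    rw [integral_const_mul, ← hc]
  have i4 : ∫ _ : H, c ^ 2 ∂μ = c ^ 2 := by simp
  rw [i1, i2, i3, i4] at h0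
  nlinarith [h0]


theorem key_cont (a₁ a₂ a₃ : ℤ) (ha₃ : a₃ = a₁ + a₂)
    (mp3 : MeasurePreserving (fun x : H => a₃ • x) μ μ)
    (mpd : MeasurePreserving (fun x : H => (a₂ - a₁) • x) μ μ)
    (mp12 : MeasurePreserving (fun x : H => (a₁ * a₂) • x) μ μ)
    {G : H → ℝ} (hG : Continuous G) :
    (∫ h, G h ∂μ) ^ 4 ≤
      ∫ h, ∫ u, ∫ v, G h * G (h + a₁ • u + a₁ ^ 2 • v) * G (h + a₂ • u + a₂ ^ 2 • v)
        * G (h + a₃ • u + a₃ ^ 2 • v) ∂μ ∂μ ∂μ := by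
  have hφ : Continuous fun x : H => G (a₃ • x) := hG.comp (continuous_zsmul a₃)
  have hψ : Continuous fun x : H => G ((a₂ - a₁) • x) := hG.comp (continuous_zsmul (a₂ - a₁))
  have hcG : Continuous (crossCor μ G G) := crossCor_cont μ hG hG
  have hcψ : Continuous (crossCor μ (fun x : H => G ((a₂ - a₁) • x))
      (fun x : H => G ((a₂ - a₁) • x))) := crossCor_cont μ hψ hψ
  have hg : Continuous (crossCor μ (fun x : H => G (a₃ • x))
      (fun x : H => G ((a₂ - a₁) • x))) := crossCor_cont μ hφ hψ
  have hGaesm : ∀ t : H, AEStronglyMeasurable (fun x : H => G x * G (t + x)) μ :=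
    fun t => ((hG.mul (hG.comp (continuous_const.add continuous_id))).aestronglyMeasurable)
  -- Step A : reduce the triple integral, for each fixed h
  have hA : ∀ h : H, ∫ u, ∫ v, G h * G (h + a₁ • u + a₁ ^ 2 • v) * G (h + a₂ • u + a₂ ^ 2 • v)
        * G (h + a₃ • u + a₃ ^ 2 • v) ∂μ ∂μ
      = ∫ s, (G h * G (h + a₃ • s)) * crossCor μ G G ((a₂ - a₁) • s) ∂μ := by
    intro h
    have caff : ∀ (c : H) (p q : ℤ), Continuous fun z : H × H => c + p • z.1 + q • z.2 :=
      fun c p q => (continuous_const.add ((continuous_zsmul p).comp continuous_fst)).add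
        ((continuous_zsmul q).comp continuous_snd)
    have hf1 : Continuous (uncurry fun u v : H =>
        G h * G (h + a₁ • u + a₁ ^ 2 • v) * G (h + a₂ • u + a₂ ^ 2 • v)
          * G (h + a₃ • u + a₃ ^ 2 • v)) := by
      unfold uncurry
      exact ((continuous_const.mul (hG.comp (caff h a₁ (a₁^2)))).mul
        (hG.comp (caff h a₂ (a₂^2)))).mul (hG.comp (caff h a₃ (a₃^2)))
    have cw : Continuous fun z : H × H => h + a₁ • z.2 - (a₁ * a₂) • z.1 :=
      (continuous_const.add ((continuous_zsmul a₁).comp continuous_snd)).sub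
        ((continuous_zsmul (a₁ * a₂)).comp continuous_fst)
    have hf2 : Continuous (uncurry fun v s : H =>
        (G h * G (h + a₃ • s)) * (G (h + a₁ • s - (a₁ * a₂) • v)
          * G ((a₂ - a₁) • s + (h + a₁ • s - (a₁ * a₂) • v)))) := by
      unfold uncurry
      exact ((continuous_const.mul (hG.comp (continuous_const.add
        ((continuous_zsmul a₃).comp continuous_snd)))).mul
        ((hG.comp cw).mul (hG.comp (((continuous_zsmul (a₂ - a₁)).comp continuous_snd).add cw))))
    calc ∫ u, ∫ v, G h * G (h + a₁ • u + a₁ ^ 2 • v) * G (h + a₂ • u + a₂ ^ 2 • v)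
          * G (h + a₃ • u + a₃ ^ 2 • v) ∂μ ∂μ
        = ∫ v, ∫ u, G h * G (h + a₁ • u + a₁ ^ 2 • v) * G (h + a₂ • u + a₂ ^ 2 • v)
          * G (h + a₃ • u + a₃ ^ 2 • v) ∂μ ∂μ := swapC μ hf1
      _ = ∫ v, ∫ s, G h * G (h + a₁ • (s - a₃ • v) + a₁ ^ 2 • v)
            * G (h + a₂ • (s - a₃ • v) + a₂ ^ 2 • v)
            * G (h + a₃ • (s - a₃ • v) + a₃ ^ 2 • v) ∂μ ∂μ := by
          refine int_congr μ fun v => ?_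
          exact (integral_sub_right_eq_self (fun u => G h * G (h + a₁ • u + a₁ ^ 2 • v)
            * G (h + a₂ • u + a₂ ^ 2 • v) * G (h + a₃ • u + a₃ ^ 2 • v)) (a₃ • v)).symm
      _ = ∫ v, ∫ s, (G h * G (h + a₃ • s)) * (G (h + a₁ • s - (a₁ * a₂) • v)
            * G ((a₂ - a₁) • s + (h + a₁ • s - (a₁ * a₂) • v))) ∂μ ∂μ := by
          refine int_congr μ fun v => int_congr μ fun s => ?_
          have e₁ : h + a₁ • (s - a₃ • v) + a₁ ^ 2 • v = h + a₁ • s - (a₁ * a₂) • v := by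
            rw [ha₃]; module
          have e₂ : h + a₂ • (s - a₃ • v) + a₂ ^ 2 • v
              = (a₂ - a₁) • s + (h + a₁ • s - (a₁ * a₂) • v) := by
            rw [ha₃]; module
          have e₃ : h + a₃ • (s - a₃ • v) + a₃ ^ 2 • v = h + a₃ • s := by module
          rw [e₁, e₂, e₃]; ring
      _ = ∫ s, ∫ v, (G h * G (h + a₃ • s)) * (G (h + a₁ • s - (a₁ * a₂) • v)
            * G ((a₂ - a₁) • s + (h + a₁ • s - (a₁ * a₂) • v))) ∂μ ∂μ := swapC μ hf2
      _ = ∫ s, (G h * G (h + a₃ • s)) * crossCor μ G G ((a₂ - a₁) • s) ∂μ := by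
          refine int_congr μ fun s => ?_
          rw [integral_const_mul]
          congr 1
          exact int_comp_sub_smul μ mp12 (h + a₁ • s)
            (f := fun x => G x * G ((a₂ - a₁) • s + x)) (hGaesm _)
  -- Step A6 : swap h and s
  have hA6 : ∫ h, ∫ s, (G h * G (h + a₃ • s)) * crossCor μ G G ((a₂ - a₁) • s) ∂μ ∂μ
      = ∫ s, crossCor μ G G (a₃ • s) * crossCor μ G G ((a₂ - a₁) • s) ∂μ := by
    have hf3 : Continuous (uncurry fun h s : H =>
        (G h * G (h + a₃ • s)) * crossCor μ G G ((a₂ - a₁) • s)) := by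
      unfold uncurry
      exact ((hG.comp continuous_fst).mul (hG.comp (continuous_fst.add
        ((continuous_zsmul a₃).comp continuous_snd)))).mul
        (hcG.comp ((continuous_zsmul (a₂ - a₁)).comp continuous_snd))
    rw [swapC μ hf3]
    refine int_congr μ fun s => ?_
    rw [integral_mul_const]
    congr 1
    have e : ∀ h : H, G h * G (h + a₃ • s) = G h * G (a₃ • s + h) := fun h => by
      rw [add_comm h (a₃ • s)]
    rw [int_congr μ e]
    rfl
  -- Step A7 : pass to φ and ψ correlations
  have hA7 : ∀ s : H, crossCor μ G G (a₃ • s)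
      = crossCor μ (fun x : H => G (a₃ • x)) (fun x : H => G (a₃ • x)) s := by
    intro s
    have e1 : crossCor μ G G (a₃ • s) = ∫ x, G x * G (a₃ • s + x) ∂μ := rfl
    rw [e1, ← int_comp_smul μ mp3 (hGaesm (a₃ • s))]
    refine int_congr μ fun x => ?_
    rw [← smul_add]
  have hA7' : ∀ s : H, crossCor μ G G ((a₂ - a₁) • s)
      = crossCor μ (fun x : H => G ((a₂ - a₁) • x)) (fun x : H => G ((a₂ - a₁) • x)) s := by
    intro s
    have e1 : crossCor μ G G ((a₂ - a₁) • s) = ∫ x, G x * G ((a₂ - a₁) • s + x) ∂μ := rfl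
    rw [e1, ← int_comp_smul μ mpd (hGaesm ((a₂ - a₁) • s))]
    refine int_congr μ fun x => ?_
    rw [← smul_add]
  -- Step D : average of the cross correlation
  have hD : ∫ z, crossCor μ (fun x : H => G (a₃ • x)) (fun x : H => G ((a₂ - a₁) • x)) z ∂μ
      = (∫ x, G x ∂μ) * (∫ x, G x ∂μ) := by
    have hf4 : Continuous (uncurry fun z x : H => G (a₃ • x) * G ((a₂ - a₁) • (z + x))) := by
      unfold uncurry
      exact (hφ.comp continuous_snd).mul
        (hψ.comp (continuous_fst.add continuous_snd))
    calc ∫ z, crossCor μ (fun x : H => G (a₃ • x)) (fun x : H => G ((a₂ - a₁) • x)) z ∂μ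
        = ∫ z, ∫ x, G (a₃ • x) * G ((a₂ - a₁) • (z + x)) ∂μ ∂μ := rfl
      _ = ∫ x, ∫ z, G (a₃ • x) * G ((a₂ - a₁) • (z + x)) ∂μ ∂μ := swapC μ hf4
      _ = ∫ x, G (a₃ • x) * (∫ z, G ((a₂ - a₁) • (z + x)) ∂μ) ∂μ := by
          refine int_congr μ fun x => ?_
          rw [integral_const_mul]
      _ = ∫ x, G (a₃ • x) * (∫ w, G ((a₂ - a₁) • w) ∂μ) ∂μ := by
          refine int_congr μ fun x => ?_
          congr 1
          exact integral_add_right_eq_self (fun w => G ((a₂ - a₁) • w)) x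
      _ = (∫ x, G (a₃ • x) ∂μ) * ∫ w, G ((a₂ - a₁) • w) ∂μ := by
          rw [integral_mul_const]
      _ = (∫ x, G x ∂μ) * (∫ x, G x ∂μ) := by
          rw [int_comp_smul μ mp3 hG.aestronglyMeasurable,
            int_comp_smul μ mpd hG.aestronglyMeasurable]
  -- assemble
  have final : ∫ h, ∫ u, ∫ v, G h * G (h + a₁ • u + a₁ ^ 2 • v) * G (h + a₂ • u + a₂ ^ 2 • v)
        * G (h + a₃ • u + a₃ ^ 2 • v) ∂μ ∂μ ∂μ
      = ∫ z, (crossCor μ (fun x : H => G (a₃ • x)) (fun x : H => G ((a₂ - a₁) • x)) z) ^ 2 ∂μ := by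
    calc ∫ h, ∫ u, ∫ v, G h * G (h + a₁ • u + a₁ ^ 2 • v) * G (h + a₂ • u + a₂ ^ 2 • v)
          * G (h + a₃ • u + a₃ ^ 2 • v) ∂μ ∂μ ∂μ
        = ∫ h, ∫ s, (G h * G (h + a₃ • s)) * crossCor μ G G ((a₂ - a₁) • s) ∂μ ∂μ :=
          int_congr μ hA
      _ = ∫ s, crossCor μ G G (a₃ • s) * crossCor μ G G ((a₂ - a₁) • s) ∂μ := hA6
      _ = ∫ s, (∫ x, G (a₃ • x) * G (a₃ • (s + x)) ∂μ)
            * crossCor μ (fun x : H => G ((a₂ - a₁) • x)) (fun x : H => G ((a₂ - a₁) • x)) s ∂μ := by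
          refine int_congr μ fun s => ?_
          rw [hA7 s, hA7' s]
          rfl
      _ = ∫ x, G (a₃ • x) * (∫ y, G (a₃ • y)
            * crossCor μ (fun x : H => G ((a₂ - a₁) • x)) (fun x : H => G ((a₂ - a₁) • x)) (y - x) ∂μ) ∂μ :=
          keyL1 μ hφ hφ hcψ
      _ = ∫ z, (crossCor μ (fun x : H => G (a₃ • x)) (fun x : H => G ((a₂ - a₁) • x)) z) ^ 2 ∂μ :=
          (keyL2 μ hφ hψ).symm
  rw [final]
  calc (∫ h, G h ∂μ) ^ 4
      = ((∫ x, G x ∂μ) * (∫ x, G x ∂μ)) ^ 2 := by ring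
    _ = (∫ z, crossCor μ (fun x : H => G (a₃ • x)) (fun x : H => G ((a₂ - a₁) • x)) z ∂μ) ^ 2 := by
        rw [hD]
    _ ≤ ∫ z, (crossCor μ (fun x : H => G (a₃ • x)) (fun x : H => G ((a₂ - a₁) • x)) z) ^ 2 ∂μ :=
        keyJensen μ hg

end Key


section Final

lemma mp_zsmul (n : ℤ) (hs : Function.Surjective fun x : H => n • x) :
    MeasurePreserving (fun x : H => n • x) μ μ := by
  have := AddMonoidHom.measurePreserving (μ := μ) (ν := μ) (f := zsmulAddGroupHom n)
    (continuous_zsmul n) hs rfl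
  exact this

lemma clamp_approx {F : H → ℝ} (hF : Measurable F) (hF0 : ∀ x, 0 ≤ F x) (hF1 : ∀ x, F x ≤ 1)
    {ε : ℝ} (hε : 0 < ε) :
    ∃ G : H → ℝ, Continuous G ∧ (∀ x, 0 ≤ G x) ∧ (∀ x, G x ≤ 1)
      ∧ ∫ x, |F x - G x| ∂μ ≤ ε := by
  have hFi : Integrable F μ := intBdd μ hF.aestronglyMeasurable (C := 1) fun x => by
    rw [Real.norm_eq_abs, abs_of_nonneg (hF0 x)]; exact hF1 x
  obtain ⟨g, hg, -⟩ := hFi.exists_boundedContinuous_integral_sub_le hε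
  refine ⟨fun x => max 0 (min 1 (g x)), continuous_const.max (continuous_const.min g.continuous),
    fun x => le_max_left _ _, fun x => max_le zero_le_one (min_le_left _ _), ?_⟩
  have hptw : ∀ x, |F x - max 0 (min 1 (g x))| ≤ |F x - g x| := by
    intro x
    have hFx : F x = max 0 (min 1 (F x)) := by
      rw [min_eq_right (hF1 x), max_eq_right (hF0 x)]
    calc |F x - max 0 (min 1 (g x))| = |max (min 1 (F x)) 0 - max (min 1 (g x)) 0| := by
          rw [max_comm (min 1 (g x)) 0, max_comm (min 1 (F x)) 0, ← hFx]
      _ ≤ |min 1 (F x) - min 1 (g x)| := abs_max_sub_max_le_abs _ _ _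
      _ ≤ max |(1:ℝ) - 1| |F x - g x| := abs_min_sub_min_le_max _ _ _ _
      _ = |F x - g x| := by
          rw [sub_self, abs_zero]
          exact max_eq_right (abs_nonneg _)
  have hGm : Measurable fun x => max 0 (min 1 (g x)) :=
    (continuous_const.max (continuous_const.min g.continuous)).measurable
  have h1 : Integrable (fun x => |F x - max 0 (min 1 (g x))|) μ := by
    refine intBdd μ ((hF.sub hGm).abs).aestronglyMeasurable (C := 1) fun x => ?_
    rw [Real.norm_eq_abs, abs_abs, abs_sub_le_iff]
    constructor
    · have := le_max_left (0:ℝ) (min 1 (g x)); have := hF1 x; linarith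
    · have := max_le zero_le_one (min_le_left (1:ℝ) (g x)); have := hF0 x; linarith
  have h2 : Integrable (fun x => |F x - g x|) μ := by
    refine intBdd μ ((hF.sub g.continuous.measurable).abs).aestronglyMeasurable
      (C := 1 + ‖g‖) fun x => ?_
    rw [Real.norm_eq_abs, abs_abs]
    calc |F x - g x| ≤ |F x| + |g x| := abs_sub _ _
      _ ≤ 1 + ‖g‖ := by
          refine add_le_add ?_ (g.norm_coe_le_norm x)
          rw [abs_of_nonneg (hF0 x)]; exact hF1 x
  calc ∫ x, |F x - max 0 (min 1 (g x))| ∂μ ≤ ∫ x, |F x - g x| ∂μ :=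
        integral_mono h1 h2 hptw
    _ ≤ ε := by simpa [Real.norm_eq_abs] using hg

variable (a₁ a₂ a₃ : ℤ)

lemma rhs_eq
    {f₀ f₁ f₂ f₃ : H → ℝ} (hm₀ : Measurable f₀)
    (hm₁ : Measurable f₁) (hm₂ : Measurable f₂) (hm₃ : Measurable f₃) :
    ∫ h, ∫ u, ∫ v, f₀ h * f₁ (h + a₁ • u + a₁ ^ 2 • v) * f₂ (h + a₂ • u + a₂ ^ 2 • v)
        * f₃ (h + a₃ • u + a₃ ^ 2 • v) ∂μ ∂μ ∂μ
      = ∫ h, f₀ h * DD μ a₁ a₂ a₃ f₁ f₂ f₃ h ∂μ := by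
  refine int_congr μ fun h => ?_
  have e1 : ∀ u : H, ∫ v, f₀ h * f₁ (h + a₁ • u + a₁ ^ 2 • v) * f₂ (h + a₂ • u + a₂ ^ 2 • v)
      * f₃ (h + a₃ • u + a₃ ^ 2 • v) ∂μ
      = f₀ h * trip μ f₁ f₂ f₃ (a₁^2) (a₂^2) (a₃^2) (h + a₁ • u) (h + a₂ • u) (h + a₃ • u) := by
    intro u
    unfold trip
    rw [← integral_const_mul (f₀ h) (fun v => f₁ (h + a₁ • u + a₁ ^ 2 • v)
      * f₂ (h + a₂ • u + a₂ ^ 2 • v) * f₃ (h + a₃ • u + a₃ ^ 2 • v))]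
    refine int_congr μ fun v => ?_
    ring
  rw [int_congr μ e1, integral_const_mul]
  rfl

lemma rhs_diff (hq₁ : MeasurePreserving (fun x : H => (a₁^2) • x) μ μ)
    (hq₂ : MeasurePreserving (fun x : H => (a₂^2) • x) μ μ)
    (hq₃ : MeasurePreserving (fun x : H => (a₃^2) • x) μ μ)
    {F G : H → ℝ} (hF : Measurable F) (hG : Measurable G)
    (hbF : ∀ x, |F x| ≤ 1) (hbG : ∀ x, |G x| ≤ 1) :
    |(∫ h, F h * DD μ a₁ a₂ a₃ F F F h ∂μ) - ∫ h, G h * DD μ a₁ a₂ a₃ G G G h ∂μ|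
      ≤ 4 * ∫ x, |F x - G x| ∂μ := by
  set Δ := ∫ x, |F x - G x| ∂μ with hΔ
  have hDF : Continuous (DD μ a₁ a₂ a₃ F F F) :=
    DD_cont μ a₁ a₂ a₃ hq₁ hq₂ hq₃ hF hF hF hbF hbF hbF
  have hDG : Continuous (DD μ a₁ a₂ a₃ G G G) :=
    DD_cont μ a₁ a₂ a₃ hq₁ hq₂ hq₃ hG hG hG hbG hbG hbG
  have hiF : Integrable (fun h => F h * DD μ a₁ a₂ a₃ F F F h) μ := by
    refine intBdd μ ((hF.mul hDF.measurable)).aestronglyMeasurable (C := 1) fun x => ?_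
    rw [Real.norm_eq_abs, abs_mul]
    exact mul_le_one₀ (hbF x) (abs_nonneg _)
      (abs_DD_le_one μ a₁ a₂ a₃ hq₁ hq₂ hq₃ hF hF hF hbF hbF hbF x)
  have hiG : Integrable (fun h => G h * DD μ a₁ a₂ a₃ G G G h) μ := by
    refine intBdd μ ((hG.mul hDG.measurable)).aestronglyMeasurable (C := 1) fun x => ?_
    rw [Real.norm_eq_abs, abs_mul]
    exact mul_le_one₀ (hbG x) (abs_nonneg _)
      (abs_DD_le_one μ a₁ a₂ a₃ hq₁ hq₂ hq₃ hG hG hG hbG hbG hbG x)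
  have hiFG : Integrable (fun x => |F x - G x| + 3 * Δ) μ := by
    refine Integrable.add ?_ (integrable_const _)
    refine intBdd μ ((hF.sub hG).abs).aestronglyMeasurable (C := 2) fun x => ?_
    rw [Real.norm_eq_abs, abs_abs]
    calc |F x - G x| ≤ |F x| + |G x| := abs_sub _ _
      _ ≤ 2 := by have := hbF x; have := hbG x; linarith
  have hptw : ∀ h : H, |F h * DD μ a₁ a₂ a₃ F F F h - G h * DD μ a₁ a₂ a₃ G G G h|
      ≤ |F h - G h| + 3 * Δ := by
    intro h
    have hDdiff : |DD μ a₁ a₂ a₃ F F F h - DD μ a₁ a₂ a₃ G G G h| ≤ 3 * Δ := by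
      have d1 := DD_diff_slot1 μ a₁ a₂ a₃ hq₁ hq₂ hq₃ hF hG hF hF hbF hbG hbF hbF h
      have d2 := DD_diff_slot2 μ a₁ a₂ a₃ hq₁ hq₂ hq₃ hG hF hG hF hbG hbF hbG hbF h
      have d3 := DD_diff_slot3 μ a₁ a₂ a₃ hq₁ hq₂ hq₃ hG hG hF hG hbG hbG hbF hbG h
      calc |DD μ a₁ a₂ a₃ F F F h - DD μ a₁ a₂ a₃ G G G h|
          ≤ |DD μ a₁ a₂ a₃ F F F h - DD μ a₁ a₂ a₃ G F F h|
            + |DD μ a₁ a₂ a₃ G F F h - DD μ a₁ a₂ a₃ G G G h| := abs_sub_le _ _ _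
        _ ≤ |DD μ a₁ a₂ a₃ F F F h - DD μ a₁ a₂ a₃ G F F h|
            + (|DD μ a₁ a₂ a₃ G F F h - DD μ a₁ a₂ a₃ G G F h|
              + |DD μ a₁ a₂ a₃ G G F h - DD μ a₁ a₂ a₃ G G G h|) :=
            add_le_add_right (abs_sub_le _ _ _) _
        _ ≤ Δ + (Δ + Δ) := by
            refine add_le_add d1 (add_le_add d2 d3)
        _ = 3 * Δ := by ring
    have e : F h * DD μ a₁ a₂ a₃ F F F h - G h * DD μ a₁ a₂ a₃ G G G h
        = (F h - G h) * DD μ a₁ a₂ a₃ F F F h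
          + G h * (DD μ a₁ a₂ a₃ F F F h - DD μ a₁ a₂ a₃ G G G h) := by ring
    rw [e]
    calc |(F h - G h) * DD μ a₁ a₂ a₃ F F F h
          + G h * (DD μ a₁ a₂ a₃ F F F h - DD μ a₁ a₂ a₃ G G G h)|
        ≤ |(F h - G h) * DD μ a₁ a₂ a₃ F F F h|
          + |G h * (DD μ a₁ a₂ a₃ F F F h - DD μ a₁ a₂ a₃ G G G h)| := abs_add_le _ _
      _ ≤ |F h - G h| + 3 * Δ := by
          refine add_le_add ?_ ?_
          · rw [abs_mul]
            exact mul_le_of_le_one_right (abs_nonneg _)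
              (abs_DD_le_one μ a₁ a₂ a₃ hq₁ hq₂ hq₃ hF hF hF hbF hbF hbF h)
          · rw [abs_mul]
            calc |G h| * |DD μ a₁ a₂ a₃ F F F h - DD μ a₁ a₂ a₃ G G G h|
                ≤ 1 * (3 * Δ) := mul_le_mul (hbG h) hDdiff (abs_nonneg _) zero_le_one
              _ = 3 * Δ := by ring
  calc |(∫ h, F h * DD μ a₁ a₂ a₃ F F F h ∂μ) - ∫ h, G h * DD μ a₁ a₂ a₃ G G G h ∂μ|
      = |∫ h, (F h * DD μ a₁ a₂ a₃ F F F h - G h * DD μ a₁ a₂ a₃ G G G h) ∂μ| := by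
        rw [integral_sub hiF hiG]
    _ ≤ ∫ h, |F h * DD μ a₁ a₂ a₃ F F F h - G h * DD μ a₁ a₂ a₃ G G G h| ∂μ := abs_int_le μ _
    _ ≤ ∫ h, (|F h - G h| + 3 * Δ) ∂μ := integral_mono ((hiF.sub hiG).abs) hiFG hptw
    _ = Δ + 3 * Δ := by
        rw [integral_add]
        · simp [← hΔ]
        · refine intBdd μ ((hF.sub hG).abs).aestronglyMeasurable (C := 2) fun x => ?_
          rw [Real.norm_eq_abs, abs_abs]
          calc |F x - G x| ≤ |F x| + |G x| := abs_sub _ _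
            _ ≤ 2 := by have := hbF x; have := hbG x; linarith
        · exact integrable_const _
    _ = 4 * Δ := by ring

end Final

end TripleAvg


open TripleAvg in
/-- For a compact abelian group `H` with Haar probability measure `μ` and coprime nonzero
integers `a₁, a₂` with `a₃ = a₁ + a₂`, assuming multiplication by `a₃`, `a₂ - a₁` and `a₁ a₂`
are surjective measure-preserving endomorphisms, for any measurable `F : H → [0,1]`,
`∫∫∫ F(h) F(h + a₁u + a₁²v) F(h + a₂u + a₂²v) F(h + a₃u + a₃²v) ≥ (∫ F)⁴`. -/
theorem triple_average_lower_bound {H : Type*} [AddCommGroup H] [TopologicalSpace H]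
    [IsTopologicalAddGroup H] [CompactSpace H] [MeasurableSpace H] [BorelSpace H]
    (μ : Measure H) [IsProbabilityMeasure μ] [μ.IsAddHaarMeasure]
    (a₁ a₂ : ℤ) (h1 : a₁ ≠ 0) (h2 : a₂ ≠ 0) (hco : IsCoprime a₁ a₂)
    (a₃ : ℤ) (ha₃ : a₃ = a₁ + a₂)
    (hsurj : ∀ n ∈ ({a₃, a₂ - a₁, a₁ * a₂} : Set ℤ),
      Function.Surjective (fun h : H => n • h))
    (hmp : ∀ n ∈ ({a₃, a₂ - a₁, a₁ * a₂} : Set ℤ),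
      MeasurePreserving (fun h : H => n • h) μ μ)
    (F : H → ℝ) (hF : Measurable F) (hF0 : ∀ h, 0 ≤ F h) (hF1 : ∀ h, F h ≤ 1) :
    (∫ h, F h ∂μ) ^ 4 ≤
      ∫ h, ∫ u, ∫ v,
        F h * F (h + a₁ • u + a₁ ^ 2 • v) * F (h + a₂ • u + a₂ ^ 2 • v)
          * F (h + a₃ • u + a₃ ^ 2 • v) ∂μ ∂μ ∂μ := by
  have s3 : Function.Surjective fun h : H => a₃ • h := hsurj a₃ (by simp)
  have s12 : Function.Surjective fun h : H => (a₁ * a₂) • h := hsurj (a₁ * a₂) (by simp)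
  have m3 : MeasurePreserving (fun h : H => a₃ • h) μ μ := hmp a₃ (by simp)
  have md : MeasurePreserving (fun h : H => (a₂ - a₁) • h) μ μ := hmp (a₂ - a₁) (by simp)
  have m12 : MeasurePreserving (fun h : H => (a₁ * a₂) • h) μ μ := hmp (a₁ * a₂) (by simp)
  have s1 : Function.Surjective fun h : H => a₁ • h := by
    have e : (fun h : H => (a₁ * a₂) • h) = (fun h : H => a₁ • h) ∘ (fun h : H => a₂ • h) := by
      funext h; simp [mul_smul]
    rw [e] at s12
    exact s12.of_comp
  have s2 : Function.Surjective fun h : H => a₂ • h := by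
    have s12' : Function.Surjective fun h : H => (a₁ * a₂) • h := hsurj (a₁ * a₂) (by simp)
    have e : (fun h : H => (a₁ * a₂) • h) = (fun h : H => a₂ • h) ∘ (fun h : H => a₁ • h) := by
      funext h; rw [mul_comm]; simp [mul_smul]
    rw [e] at s12'
    exact s12'.of_comp
  have sq1 : Function.Surjective fun h : H => (a₁ ^ 2) • h := by
    have e : (fun h : H => (a₁ ^ 2) • h) = (fun h : H => a₁ • h) ∘ (fun h : H => a₁ • h) := by
      funext h; simp [pow_two, mul_smul]
    rw [e]; exact s1.comp s1
  have sq2 : Function.Surjective fun h : H => (a₂ ^ 2) • h := by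
    have e : (fun h : H => (a₂ ^ 2) • h) = (fun h : H => a₂ • h) ∘ (fun h : H => a₂ • h) := by
      funext h; simp [pow_two, mul_smul]
    rw [e]; exact s2.comp s2
  have sq3 : Function.Surjective fun h : H => (a₃ ^ 2) • h := by
    have e : (fun h : H => (a₃ ^ 2) • h) = (fun h : H => a₃ • h) ∘ (fun h : H => a₃ • h) := by
      funext h; simp [pow_two, mul_smul]
    rw [e]; exact s3.comp s3
  have mq₁ : MeasurePreserving (fun x : H => (a₁ ^ 2) • x) μ μ := mp_zsmul μ (a₁ ^ 2) sq1
  have mq₂ : MeasurePreserving (fun x : H => (a₂ ^ 2) • x) μ μ := mp_zsmul μ (a₂ ^ 2) sq2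
  have mq₃ : MeasurePreserving (fun x : H => (a₃ ^ 2) • x) μ μ := mp_zsmul μ (a₃ ^ 2) sq3
  have hbF : ∀ x, |F x| ≤ 1 := fun x => abs_le.2 ⟨by linarith [hF0 x], hF1 x⟩
  have hiF : Integrable F μ := intBdd μ hF.aestronglyMeasurable (C := 1) fun x => by
    rw [Real.norm_eq_abs]; exact hbF x
  rw [rhs_eq μ a₁ a₂ a₃ hF hF hF hF]
  refine le_of_forall_pos_le_add fun ε hε => ?_
  obtain ⟨G, hGc, hG0, hG1, hFG⟩ := clamp_approx μ hF hF0 hF1 (show (0:ℝ) < ε/8 by linarith)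
  have hbG : ∀ x, |G x| ≤ 1 := fun x => abs_le.2 ⟨by linarith [hG0 x], hG1 x⟩
  have hGm : Measurable G := hGc.measurable
  have hiG : Integrable G μ := intBdd μ hGm.aestronglyMeasurable (C := 1) fun x => by
    rw [Real.norm_eq_abs]; exact hbG x
  have hkey := key_cont μ a₁ a₂ a₃ ha₃ m3 md m12 hGc
  rw [rhs_eq μ a₁ a₂ a₃ hGm hGm hGm hGm] at hkey
  -- integral closeness
  have hintclose : |(∫ h, F h ∂μ) - ∫ h, G h ∂μ| ≤ ε/8 := by
    calc |(∫ h, F h ∂μ) - ∫ h, G h ∂μ| = |∫ h, (F h - G h) ∂μ| := by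
          rw [integral_sub hiF hiG]
      _ ≤ ∫ h, |F h - G h| ∂μ := abs_int_le μ _
      _ ≤ ε/8 := hFG
  have h0F : 0 ≤ ∫ h, F h ∂μ := integral_nonneg hF0
  have h1F : ∫ h, F h ∂μ ≤ 1 := by
    calc ∫ h, F h ∂μ ≤ ∫ _, (1:ℝ) ∂μ := integral_mono hiF (integrable_const _) hF1
      _ = 1 := by simp
  have h0G : 0 ≤ ∫ h, G h ∂μ := integral_nonneg hG0
  have h1G : ∫ h, G h ∂μ ≤ 1 := by
    calc ∫ h, G h ∂μ ≤ ∫ _, (1:ℝ) ∂μ := integral_mono hiG (integrable_const _) hG1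
      _ = 1 := by simp
  have hpow : (∫ h, F h ∂μ) ^ 4 ≤ (∫ h, G h ∂μ) ^ 4 + ε/2 := by
    set x := ∫ h, F h ∂μ
    set y := ∫ h, G h ∂μ
    rcases le_total x y with hxy | hxy
    · have h4 : x ^ 4 ≤ y ^ 4 := pow_le_pow_left₀ h0F hxy 4
      linarith
    · have hd : x - y ≤ ε/8 := (abs_le.1 hintclose).2
      have hx2 : x^2 ≤ 1 := by nlinarith
      have hy2 : y^2 ≤ 1 := by nlinarith
      have hx3 : x^3 ≤ 1 := by nlinarith
      have hy3 : y^3 ≤ 1 := by nlinarith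
      have hxxy : x^2*y ≤ 1 := by nlinarith
      have hxyy : x*y^2 ≤ 1 := by nlinarith
      have hb : x^3 + x^2*y + x*y^2 + y^3 ≤ 4 := by linarith
      have hnn : 0 ≤ x^3 + x^2*y + x*y^2 + y^3 := by positivity
      have hfin : x^4 - y^4 ≤ (ε/8) * 4 := by
        have e : x^4 - y^4 = (x - y) * (x^3 + x^2*y + x*y^2 + y^3) := by ring
        rw [e]
        exact mul_le_mul hd hb hnn (by linarith)
      linarith
  have hdiff := rhs_diff μ a₁ a₂ a₃ mq₁ mq₂ mq₃ hF hGm hbF hbG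
  have hGD_le : ∫ h, G h * DD μ a₁ a₂ a₃ G G G h ∂μ
      ≤ (∫ h, F h * DD μ a₁ a₂ a₃ F F F h ∂μ) + ε/2 := by
    have h4 : (4:ℝ) * ∫ x, |F x - G x| ∂μ ≤ 4 * (ε/8) := by linarith [hFG]
    have := (abs_le.1 hdiff).1
    linarith
  calc (∫ h, F h ∂μ) ^ 4 ≤ (∫ h, G h ∂μ) ^ 4 + ε/2 := hpow
    _ ≤ ((∫ h, G h * DD μ a₁ a₂ a₃ G G G h ∂μ) : ℝ) + ε/2 := by linarith [hkey]
    _ ≤ (∫ h, F h * DD μ a₁ a₂ a₃ F F F h ∂μ) + ε/2 + ε/2 := by linarith [hGD_le]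
    _ = (∫ h, F h * DD μ a₁ a₂ a₃ F F F h ∂μ) + ε := by ring
end

section
/- Let α_1, ..., α_r ∈ ℝ/ℤ be irrational and rationally independent (1, α_1, ..., α_r linearly independent over ℚ), and let u_1, ..., u_r : ℤ → ℤ^m be polynomials with zero constant term. Then the sequence (u_1(n)α_1 + ... + u_r(n)α_r mod 1)_{n ∈ ℤ} is well-distributed in the closed subtorus of (ℝ/ℤ)^m which is the image mod 1 of span_ℝ{u_1(ℝ)} + ... + span_ℝ{u_r(ℝ)}. -/
open Filter MeasureTheory

/-- A Følner sequence in a countable discrete abelian group. -/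
def IsFolner {G : Type*} [AddCommGroup G] [DecidableEq G] (Φ : ℕ → Finset G) : Prop :=
  (∀ N, (Φ N).Nonempty) ∧
    ∀ g : G, Tendsto
      (fun N => ((symmDiff ((Φ N).image (· + g)) (Φ N)).card : ℝ) / ((Φ N).card : ℝ))
      atTop (nhds 0)

/-- A `G`-indexed sequence `u` in a topological space `X` is well-distributed w.r.t. a
measure `μ` if for every Følner sequence `(Φ N)` in `G` and every continuous `f : X → ℂ`,
the averages of `f ∘ u` along `Φ N` converge to `∫ f dμ`. -/
def WellDistributed {G X : Type*} [AddCommGroup G] [DecidableEq G]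
    [TopologicalSpace X] [MeasurableSpace X] (μ : Measure X) (u : G → X) : Prop :=
  ∀ Φ : ℕ → Finset G, IsFolner Φ → ∀ f : C(X, ℂ),
    Tendsto (fun N => (∑ n ∈ Φ N, f (u n)) / ((Φ N).card : ℂ))
      atTop (nhds (∫ x, f x ∂μ))


noncomputable def ee (x : ℝ) : ℂ := Complex.exp (2 * Real.pi * Complex.I * x)

lemma ee_norm (x : ℝ) : ‖ee x‖ = 1 := by
  unfold ee
  rw [show (2 * Real.pi * Complex.I * x) = (2 * Real.pi * x : ℝ) * Complex.I by push_cast; ring]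
  exact Complex.norm_exp_ofReal_mul_I _

lemma ee_add (x y : ℝ) : ee (x + y) = ee x * ee y := by
  unfold ee; rw [← Complex.exp_add]; push_cast; ring_nf

lemma ee_conj (x : ℝ) : (starRingEnd ℂ) (ee x) = ee (-x) := by
  unfold ee
  rw [← Complex.exp_conj]
  congr 1
  simp only [map_mul, Complex.conj_I, Complex.conj_ofReal, map_ofNat]
  push_cast; ring

lemma ee_eq_one (x : ℝ) (h : ee x = 1) : ∃ n : ℤ, x = n := by
  unfold ee at h
  rw [Complex.exp_eq_one_iff] at h
  obtain ⟨n, hn⟩ := h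
  refine ⟨n, ?_⟩
  have h2 : (2 * Real.pi * Complex.I : ℂ) ≠ 0 := by
    simp [Real.pi_ne_zero, Complex.I_ne_zero]
  have : (x : ℂ) = n := by
    apply mul_left_cancel₀ h2
    rw [hn]; ring
  exact_mod_cast this

noncomputable def avg (Φ : ℕ → Finset ℤ) (f : ℤ → ℂ) (N : ℕ) : ℂ :=
  (∑ n ∈ Φ N, f n) / ((Φ N).card : ℂ)

lemma avg_norm_le {Φ : ℕ → Finset ℤ} {f : ℤ → ℂ} {C : ℝ} (hC : 0 ≤ C)
    (hf : ∀ n, ‖f n‖ ≤ C) (N : ℕ) (hne : (Φ N).Nonempty) : ‖avg Φ f N‖ ≤ C := by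
  have hcard : (0:ℝ) < (Φ N).card := by
    exact_mod_cast Finset.card_pos.2 hne
  unfold avg
  rw [norm_div]
  rw [div_le_iff₀ (by simpa using hcard)]
  calc ‖∑ n ∈ Φ N, f n‖ ≤ ∑ n ∈ Φ N, ‖f n‖ := norm_sum_le _ _
    _ ≤ ∑ _n ∈ Φ N, C := Finset.sum_le_sum fun n _ => hf n
    _ = (Φ N).card * C := by rw [Finset.sum_const, nsmul_eq_mul]
    _ ≤ C * ‖((Φ N).card : ℂ)‖ := by
        simp only [Complex.norm_natCast]
        rw [mul_comm]

lemma avg_shift {Φ : ℕ → Finset ℤ} (hΦ : IsFolner Φ) (f : ℤ → ℂ) {C : ℝ}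
    (hf : ∀ n, ‖f n‖ ≤ C) (g : ℤ) :
    Tendsto (fun N => avg Φ (fun n => f (n + g)) N - avg Φ f N) atTop (nhds 0) := by
  have hC : 0 ≤ C := le_trans (norm_nonneg _) (hf 0)
  apply squeeze_zero_norm (a := fun N =>
    C * (((symmDiff ((Φ N).image (· + g)) (Φ N)).card : ℝ) / ((Φ N).card : ℝ)))
  · intro N
    have hcard : (0:ℝ) < (Φ N).card := by exact_mod_cast Finset.card_pos.2 (hΦ.1 N)
    set S := Φ N with hS
    set T := S.image (· + g) with hT
    have hsum : ∑ n ∈ S, f (n + g) = ∑ t ∈ T, f t := by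
      rw [hT, Finset.sum_image (by intro a _ b _ h; simpa using h)]
    have h1 : avg Φ (fun n => f (n + g)) N - avg Φ f N
        = (∑ t ∈ T, f t - ∑ n ∈ S, f n) / (S.card : ℂ) := by
      unfold avg
      rw [← hS, hsum, sub_div]
    rw [h1]
    have h2 : ∑ t ∈ T, f t - ∑ n ∈ S, f n = ∑ t ∈ T \ S, f t - ∑ n ∈ S \ T, f n :=
      Finset.sum_sdiff_sub_sum_sdiff.symm
    have h3 : ‖∑ t ∈ T, f t - ∑ n ∈ S, f n‖ ≤ C * ((symmDiff T S).card : ℝ) := by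
      rw [h2]
      have hsd : (symmDiff T S) = (T \ S) ∪ (S \ T) := by
        rw [symmDiff_def, Finset.sup_eq_union]
      rw [hsd, Finset.card_union_of_disjoint disjoint_sdiff_sdiff]
      calc ‖∑ t ∈ T \ S, f t - ∑ n ∈ S \ T, f n‖
          ≤ ‖∑ t ∈ T \ S, f t‖ + ‖∑ n ∈ S \ T, f n‖ := norm_sub_le _ _
        _ ≤ ∑ t ∈ T \ S, ‖f t‖ + ∑ n ∈ S \ T, ‖f n‖ :=
            add_le_add (norm_sum_le _ _) (norm_sum_le _ _)
        _ ≤ (T \ S).card * C + (S \ T).card * C := by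
            apply add_le_add <;>
            · refine le_trans (Finset.sum_le_sum fun n _ => hf n) ?_
              rw [Finset.sum_const, nsmul_eq_mul]
        _ = C * (((T \ S).card + (S \ T).card : ℕ) : ℝ) := by push_cast; ring
    rw [norm_div]
    simp only [Complex.norm_natCast]
    rw [div_le_iff₀ hcard]
    calc ‖∑ t ∈ T, f t - ∑ n ∈ S, f n‖ ≤ C * ((symmDiff T S).card : ℝ) := h3
      _ = C * ((symmDiff T S).card / (S.card:ℝ)) * (S.card:ℝ) := by
          field_simp
  · have := (hΦ.2 g).const_mul C
    simpa using this

lemma avg_linear {Φ : ℕ → Finset ℤ} (hΦ : IsFolner Φ) (β c : ℝ) (hβ : Irrational β) :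
    Tendsto (avg Φ (fun n => ee (β * n + c))) atTop (nhds 0) := by
  set f : ℤ → ℂ := fun n => ee (β * n + c) with hfdef
  have hbd : ∀ n, ‖f n‖ ≤ 1 := fun n => le_of_eq (ee_norm _)
  have hshift : ∀ n : ℤ, f (n + 1) = ee β * f n := by
    intro n
    simp only [hfdef]
    rw [← ee_add]
    congr 1
    push_cast; ring
  have h1 : Tendsto (fun N => (ee β - 1) * avg Φ f N) atTop (nhds 0) := by
    have h2 := avg_shift hΦ f hbd 1
    have h3 : ∀ N, avg Φ (fun n => f (n + 1)) N - avg Φ f N = (ee β - 1) * avg Φ f N := by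
      intro N
      unfold avg
      simp only [hshift]
      rw [← Finset.mul_sum, ← mul_div_assoc]
      ring
    simpa only [h3] using h2
  have hne : ee β - 1 ≠ 0 := by
    intro h
    have : ee β = 1 := by linear_combination h
    obtain ⟨n, hn⟩ := ee_eq_one _ this
    exact hβ ⟨(n : ℚ), by push_cast; exact hn.symm⟩
  have := h1.const_mul (ee β - 1)⁻¹
  simp only [mul_zero] at this
  convert this using 2 with N
  field_simp


lemma vdc {Φ : ℕ → Finset ℤ} (hΦ : IsFolner Φ) (f : ℤ → ℂ) (hf : ∀ n, ‖f n‖ ≤ 1)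
    (hd : ∀ d : ℤ, d ≠ 0 →
      Tendsto (avg Φ (fun n => f (n + d) * (starRingEnd ℂ) (f n))) atTop (nhds 0)) :
    Tendsto (avg Φ f) atTop (nhds 0) := by
  rw [NormedAddCommGroup.tendsto_nhds_zero]
  intro ε hε
  obtain ⟨H, hHgt⟩ := exists_nat_gt (max (8/ε^2) 1)
  have hHR : (0:ℝ) < H := lt_trans zero_lt_one (lt_of_le_of_lt (le_max_right (8/ε^2) 1) hHgt)
  have hHpos : 0 < H := by exact_mod_cast hHR
  have hHC : (H:ℂ) ≠ 0 := by exact_mod_cast hHR.ne'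
  have hH1 : (1:ℝ)/H < ε^2/8 := by
    have h8 : 8/ε^2 < H := lt_of_le_of_lt (le_max_left _ _) hHgt
    rw [div_lt_div_iff₀ hHR (by positivity : (0:ℝ) < 8)]
    rw [div_lt_iff₀ (by positivity : (0:ℝ) < ε^2)] at h8
    nlinarith
  have hcard : ∀ N, (0:ℝ) < ((Φ N).card : ℝ) :=
    fun N => by exact_mod_cast Finset.card_pos.2 (hΦ.1 N)
  set W : ℤ → ℂ := fun n => ∑ h ∈ Finset.range H, f (n + ((h:ℤ)+1)) with hW
  set F : ℤ → ℂ := fun n => W n / (H:ℂ) with hF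
  -- Claim A : avg f - avg F → 0
  have hshift : ∀ h : ℕ,
      Tendsto (fun N => avg Φ f N - avg Φ (fun n => f (n + ((h:ℤ)+1))) N) atTop (nhds 0) :=
    fun h => by simpa using (avg_shift hΦ f hf ((h:ℤ)+1)).neg
  have hsum0 : Tendsto (fun N =>
      (∑ h ∈ Finset.range H, (avg Φ f N - avg Φ (fun n => f (n + ((h:ℤ)+1))) N)) / (H:ℂ))
      atTop (nhds 0) := by
    have := tendsto_finset_sum (Finset.range H) (fun h (_ : h ∈ Finset.range H) => hshift h)
    simpa using this.div_const (H:ℂ)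
  have havgF : ∀ N, avg Φ F N
      = (∑ h ∈ Finset.range H, avg Φ (fun n => f (n + ((h:ℤ)+1))) N) / (H:ℂ) := by
    intro N
    unfold avg
    simp only [hF, hW]
    rw [← Finset.sum_div, ← Finset.sum_div, Finset.sum_comm, div_right_comm]
  have hA : Tendsto (fun N => avg Φ f N - avg Φ F N) atTop (nhds 0) := by
    have heq : (fun N => avg Φ f N - avg Φ F N) = fun N =>
        (∑ h ∈ Finset.range H, (avg Φ f N - avg Φ (fun n => f (n + ((h:ℤ)+1))) N)) / (H:ℂ) := by
      funext N
      rw [havgF N, Finset.sum_sub_distrib, sub_div, Finset.sum_const, Finset.card_range,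
        nsmul_eq_mul, mul_div_cancel_left₀ _ hHC]
    rw [heq]; exact hsum0
  set P := Finset.range H ×ˢ Finset.range H with hP
  set T : ℕ × ℕ → ℕ → ℂ := fun p N =>
    avg Φ (fun n => f (n + ((p.1:ℤ)+1)) * (starRingEnd ℂ) (f (n + ((p.2:ℤ)+1)))) N with hT
  have hTbd : ∀ p N, ‖T p N‖ ≤ 1 := by
    intro p N
    apply avg_norm_le zero_le_one _ N (hΦ.1 N)
    intro n
    rw [norm_mul, RCLike.norm_conj]
    exact mul_le_one₀ (hf _) (norm_nonneg _) (hf _)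
  have hoff : ∀ p : ℕ × ℕ, p.1 ≠ p.2 → Tendsto (T p) atTop (nhds 0) := by
    intro p hp
    set d : ℤ := (p.1:ℤ) - (p.2:ℤ) with hd2
    have hdne : d ≠ 0 := by
      simp only [hd2, sub_ne_zero]
      exact_mod_cast hp
    set g : ℤ → ℂ := fun n => f (n + d) * (starRingEnd ℂ) (f n) with hg
    have hgbd : ∀ n, ‖g n‖ ≤ 1 := by
      intro n
      simp only [hg, norm_mul, RCLike.norm_conj]
      exact mul_le_one₀ (hf _) (norm_nonneg _) (hf _)
    have hTg : T p = fun N => avg Φ (fun n => g (n + ((p.2:ℤ)+1))) N := by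
      funext N
      simp only [hT, hg]
      unfold avg
      congr 1
      apply Finset.sum_congr rfl
      intro n _
      congr 2
      · simp only [hg, hd2]; ring
    rw [hTg]
    have h1 := avg_shift hΦ g hgbd ((p.2:ℤ)+1)
    have h2 := hd d hdne
    have h3 := h1.add h2
    simp only [sub_add_cancel, add_zero] at h3
    convert h3 using 2
    exact (sub_add_cancel _ _).symm
  have hev1 : ∀ᶠ N in atTop, ∀ p ∈ P, p.1 ≠ p.2 → ‖T p N‖ < ε^2/16 := by
    rw [Filter.eventually_all_finset]
    intro p hp
    by_cases hpe : p.1 = p.2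
    · exact Filter.Eventually.of_forall (fun N h => absurd hpe h)
    · have := (NormedAddCommGroup.tendsto_nhds_zero.1 (hoff p hpe)) (ε^2/16) (by positivity)
      filter_upwards [this] with N h _
      exact h
  have hev2 : ∀ᶠ N in atTop, ‖avg Φ f N - avg Φ F N‖ < ε/2 :=
    NormedAddCommGroup.tendsto_nhds_zero.1 hA (ε/2) (by positivity)
  filter_upwards [hev1, hev2] with N h1 h2
  set c : ℝ := ((Φ N).card : ℝ) with hc
  have hc0 : 0 < c := hcard N
  set E : ℕ × ℕ → ℂ := fun p =>
    ∑ n ∈ Φ N, f (n + ((p.1:ℤ)+1)) * (starRingEnd ℂ) (f (n + ((p.2:ℤ)+1))) with hE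
  have hTE : ∀ p, ‖E p‖ = ‖T p N‖ * c := by
    intro p
    simp only [hT]
    unfold avg
    rw [norm_div, Complex.norm_natCast, div_mul_cancel₀]
    exact hc0.ne'
  -- pointwise: ‖W n‖^2 as a double sum
  have hWsq : ∀ n : ℤ, (‖W n‖:ℝ)^2
      = (∑ p ∈ P, f (n + ((p.1:ℤ)+1)) * (starRingEnd ℂ) (f (n + ((p.2:ℤ)+1)))).re := by
    intro n
    have h1 : W n * (starRingEnd ℂ) (W n)
        = ∑ p ∈ P, f (n + ((p.1:ℤ)+1)) * (starRingEnd ℂ) (f (n + ((p.2:ℤ)+1))) := by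
      simp only [hW, map_sum]
      rw [Finset.sum_mul_sum, hP, Finset.sum_product]
    have h2 : (W n * (starRingEnd ℂ) (W n)).re = ‖W n‖^2 := by
      rw [Complex.mul_conj, Complex.ofReal_re, Complex.normSq_eq_norm_sq]
    rw [← h1, h2]
  have hsum : ∑ n ∈ Φ N, (‖F n‖:ℝ)^2 = (∑ p ∈ P, E p).re / (H:ℝ)^2 := by
    have : ∀ n : ℤ, (‖F n‖:ℝ)^2 = (‖W n‖:ℝ)^2 / (H:ℝ)^2 := by
      intro n
      simp only [hF]
      rw [norm_div, Complex.norm_natCast, div_pow]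
    simp only [this, hWsq]
    rw [← Finset.sum_div, ← Complex.re_sum]
    congr 2
    rw [Finset.sum_comm]
  -- key inequality
  have key : ‖avg Φ F N‖^2 ≤ (∑ p ∈ P, ‖T p N‖) / (H:ℝ)^2 := by
    have s1 : ‖avg Φ F N‖ ≤ (∑ n ∈ Φ N, ‖F n‖) / c := by
      unfold avg
      rw [norm_div, Complex.norm_natCast]
      gcongr
      exact norm_sum_le _ _
    have s2 : ‖avg Φ F N‖^2 ≤ (∑ n ∈ Φ N, (‖F n‖:ℝ)^2) / c := by
      calc ‖avg Φ F N‖^2 ≤ ((∑ n ∈ Φ N, ‖F n‖) / c)^2 := by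
            apply pow_le_pow_left₀ (norm_nonneg _) s1
        _ = (∑ n ∈ Φ N, ‖F n‖)^2 / c^2 := by rw [div_pow]
        _ ≤ (c * ∑ n ∈ Φ N, (‖F n‖:ℝ)^2) / c^2 := by
            gcongr
            have := sq_sum_le_card_mul_sum_sq (s := Φ N) (f := fun n => ‖F n‖)
            exact_mod_cast this
        _ = (∑ n ∈ Φ N, (‖F n‖:ℝ)^2) / c := by
            field_simp
    have s3 : (∑ n ∈ Φ N, (‖F n‖:ℝ)^2) / c ≤ (∑ p ∈ P, ‖T p N‖) / (H:ℝ)^2 := by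
      rw [hsum]
      have s4 : (∑ p ∈ P, E p).re ≤ ∑ p ∈ P, ‖T p N‖ * c := by
        calc (∑ p ∈ P, E p).re ≤ ‖∑ p ∈ P, E p‖ := Complex.re_le_norm _
          _ ≤ ∑ p ∈ P, ‖E p‖ := norm_sum_le _ _
          _ = ∑ p ∈ P, ‖T p N‖ * c := by simp only [hTE]
      have s4 : (∑ p ∈ P, E p).re ≤ (∑ p ∈ P, ‖T p N‖) * c := by
        calc (∑ p ∈ P, E p).re ≤ ‖∑ p ∈ P, E p‖ := Complex.re_le_norm _
          _ ≤ ∑ p ∈ P, ‖E p‖ := norm_sum_le _ _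
          _ = (∑ p ∈ P, ‖T p N‖) * c := by
              rw [Finset.sum_mul]
              exact Finset.sum_congr rfl fun p _ => hTE p
      calc (∑ p ∈ P, E p).re / (H:ℝ)^2 / c
          ≤ ((∑ p ∈ P, ‖T p N‖) * c) / (H:ℝ)^2 / c := by gcongr
        _ = (∑ p ∈ P, ‖T p N‖) / (H:ℝ)^2 := by
            field_simp
    exact s2.trans s3
  have bnd : (∑ p ∈ P, ‖T p N‖) ≤ (H:ℝ) + (H:ℝ)^2 * (ε^2/16) := by
    have step : ∀ p ∈ P, ‖T p N‖ ≤ if p.1 = p.2 then (1:ℝ) else ε^2/16 := by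
      intro p hp
      by_cases hpe : p.1 = p.2
      · rw [if_pos hpe]; exact hTbd p N
      · rw [if_neg hpe]; exact (h1 p hp hpe).le
    calc (∑ p ∈ P, ‖T p N‖) ≤ ∑ p ∈ P, (if p.1 = p.2 then (1:ℝ) else ε^2/16) :=
          Finset.sum_le_sum step
      _ = ((P.filter (fun p => p.1 = p.2)).card : ℝ) * 1
          + ((P.filter (fun p => ¬ p.1 = p.2)).card : ℝ) * (ε^2/16) := by
          rw [Finset.sum_ite, Finset.sum_const, Finset.sum_const, nsmul_eq_mul, nsmul_eq_mul]
      _ ≤ (H:ℝ) * 1 + (H:ℝ)^2 * (ε^2/16) := by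
          apply add_le_add
          · apply mul_le_mul_of_nonneg_right _ zero_le_one
            have hcardd : (P.filter (fun p => p.1 = p.2)).card ≤ H := by
              have : (P.filter (fun p => p.1 = p.2)).card ≤ (Finset.range H).card := by
                apply Finset.card_le_card_of_injOn (fun p => p.1)
                · intro p hp
                  simp only [Finset.coe_filter, Set.mem_setOf_eq, Finset.mem_filter, hP, Finset.mem_product] at hp
                  exact hp.1.1
                · intro p hp q hq hpq
                  have hpq' : p.1 = q.1 := hpq
                  simp only [Finset.coe_filter, Set.mem_setOf_eq] at hp hq
                  have hsnd : p.2 = q.2 := by rw [← hp.2, ← hq.2, hpq']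
                  exact Prod.ext hpq' hsnd
              simpa using this
            exact_mod_cast hcardd
          · apply mul_le_mul_of_nonneg_right _ (by positivity)
            have hle : (P.filter (fun p => ¬ p.1 = p.2)).card ≤ P.card :=
              Finset.card_filter_le _ _
            have hPcard : P.card = H * H := by
              simp [hP]
            calc ((P.filter (fun p => ¬ p.1 = p.2)).card : ℝ) ≤ (P.card : ℝ) := by
                  exact_mod_cast hle
              _ = (H:ℝ)^2 := by rw [hPcard]; push_cast; ring
      _ = (H:ℝ) + (H:ℝ)^2 * (ε^2/16) := by ring
  have hFsmall : ‖avg Φ F N‖ < ε/2 := by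
    have hε2 : (0:ℝ) < ε^2 := by positivity
    have h5 : ‖avg Φ F N‖^2 ≤ 1/(H:ℝ) + ε^2/16 := by
      calc ‖avg Φ F N‖^2 ≤ (∑ p ∈ P, ‖T p N‖) / (H:ℝ)^2 := key
        _ ≤ ((H:ℝ) + (H:ℝ)^2 * (ε^2/16)) / (H:ℝ)^2 := by gcongr
        _ = 1/(H:ℝ) + ε^2/16 := by field_simp
    have h6 : ‖avg Φ F N‖^2 < (ε/2)^2 := by
      have heq4 : (ε/2)^2 = ε^2/4 := by ring
      rw [heq4]
      calc ‖avg Φ F N‖^2 ≤ 1/(H:ℝ) + ε^2/16 := h5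
        _ < ε^2/8 + ε^2/16 := by linarith
        _ < ε^2/4 := by linarith
    exact lt_of_pow_lt_pow_left₀ 2 (by positivity) h6
  calc ‖avg Φ f N‖ = ‖(avg Φ f N - avg Φ F N) + avg Φ F N‖ := by ring_nf
    _ ≤ ‖avg Φ f N - avg Φ F N‖ + ‖avg Φ F N‖ := norm_add_le _ _
    _ < ε/2 + ε/2 := add_lt_add h2 hFsmall
    _ = ε := by ring


section Irr
variable {r : ℕ} {α : Fin r → ℝ}

lemma irrational_comb
    (hα : ∀ (q₀ : ℚ) (q : Fin r → ℚ), (q₀ : ℝ) + ∑ i, (q i : ℝ) * α i = 0 → q₀ = 0 ∧ q = 0)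
    (a : Fin r → ℤ) (ha : a ≠ 0) : Irrational (∑ i, (a i : ℝ) * α i) := by
  intro h
  obtain ⟨q, hq⟩ := h
  have h0 : ((-q : ℚ) : ℝ) + ∑ i, (((fun i => (a i : ℚ)) i : ℚ) : ℝ) * α i = 0 := by
    push_cast
    rw [← hq]
    ring
  have := (hα (-q) (fun i => (a i : ℚ)) h0).2
  apply ha
  funext i
  have hi := congrFun this i
  simpa using hi

/-- coefficient of `taylor` above the degree -/
lemma taylor_coeff_high (p : Polynomial ℤ) (d : ℤ) (k : ℕ) (hk : p.natDegree ≤ k) :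
    (Polynomial.taylor d p).coeff k = p.coeff k := by
  rw [Polynomial.taylor_coeff]
  have : Polynomial.hasseDeriv k p = Polynomial.C (p.coeff k) := by
    ext n
    rw [Polynomial.hasseDeriv_coeff, Polynomial.coeff_C]
    cases n with
    | zero => simp
    | succ n =>
      have : p.coeff (n + 1 + k) = 0 :=
        Polynomial.coeff_eq_zero_of_natDegree_lt (by omega)
      simp [this]
  rw [this, Polynomial.eval_C]

lemma hasse_top (p : Polynomial ℤ) (D : ℕ) (hp : p.natDegree ≤ D + 1) :
    Polynomial.hasseDeriv D p
      = Polynomial.C (p.coeff D) + Polynomial.C ((D+1 : ℤ) * p.coeff (D+1)) * Polynomial.X := by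
  ext n
  rw [Polynomial.hasseDeriv_coeff]
  match n with
  | 0 => simp
  | 1 =>
    rw [Polynomial.coeff_add, Polynomial.coeff_C, Polynomial.coeff_C_mul, Polynomial.coeff_X_one,
      if_neg one_ne_zero, mul_one, zero_add]
    have hch : (1 + D).choose D = D + 1 := by
      rw [add_comm]; exact Nat.choose_succ_self_right D
    rw [hch, add_comm 1 D]
    push_cast
    ring
  | (n+2) =>
    have h0 : p.coeff (n + 2 + D) = 0 := Polynomial.coeff_eq_zero_of_natDegree_lt (by omega)
    rw [Polynomial.coeff_add, Polynomial.coeff_C, Polynomial.coeff_C_mul, Polynomial.coeff_X,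
      if_neg (by omega), if_neg (by omega), h0]
    simp

end Irr

lemma weyl {r : ℕ} {α : Fin r → ℝ} {Φ : ℕ → Finset ℤ} (hΦ : IsFolner Φ)
    (hα : ∀ (q₀ : ℚ) (q : Fin r → ℚ), (q₀ : ℝ) + ∑ i, (q i : ℝ) * α i = 0 → q₀ = 0 ∧ q = 0)
    (D : ℕ) :
    ∀ Q : Fin r → Polynomial ℤ, (∀ i, (Q i).natDegree ≤ D) → (∃ i, 1 ≤ (Q i).natDegree) →
    Tendsto (avg Φ (fun n => ee (∑ i, (((Q i).eval n : ℤ) : ℝ) * α i))) atTop (nhds 0) := by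
  induction D with
  | zero =>
    intro Q hdeg hex
    obtain ⟨i, hi⟩ := hex
    exact absurd (hdeg i) (by omega)
  | succ D IH =>
    intro Q hdeg hex
    by_cases hall : ∀ i, (Q i).natDegree ≤ D
    · exact IH Q hall hex
    push_neg at hall
    obtain ⟨i₀, hi₀⟩ := hall
    have hdeg₀ : (Q i₀).natDegree = D + 1 := le_antisymm (hdeg i₀) (by omega)
    have hQne : Q i₀ ≠ 0 := by
      intro h
      rw [h, Polynomial.natDegree_zero] at hdeg₀
      omega
    have hlead : (Q i₀).coeff (D + 1) ≠ 0 := by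
      rw [← hdeg₀]
      exact Polynomial.leadingCoeff_ne_zero.2 hQne
    rcases Nat.eq_zero_or_pos D with hD0 | hDpos
    · -- base case: degree 1
      subst hD0
      have hev : ∀ (i : Fin r) (n : ℤ),
          (((Q i).eval n : ℤ) : ℝ) = ((Q i).coeff 0 : ℝ) + ((Q i).coeff 1 : ℝ) * (n : ℝ) := by
        intro i n
        have h2 := Polynomial.eval_eq_sum_range' (lt_of_le_of_lt (hdeg i) one_lt_two) n
        rw [show (2:ℕ) = 1 + 1 from rfl] at h2
        rw [Finset.sum_range_succ, Finset.sum_range_one] at h2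
        rw [h2]
        push_cast
        ring
      set β : ℝ := ∑ i, ((Q i).coeff 1 : ℝ) * α i with hβ
      set c : ℝ := ∑ i, ((Q i).coeff 0 : ℝ) * α i with hc
      have hirr : Irrational β := by
        apply irrational_comb hα (fun i => (Q i).coeff 1)
        intro h
        apply hlead
        simpa using congrFun h i₀
      have heq : (fun n : ℤ => ee (∑ i, (((Q i).eval n : ℤ) : ℝ) * α i))
          = fun n : ℤ => ee (β * n + c) := by
        funext n
        congr 1
        simp only [hev, hβ, hc]
        rw [Finset.sum_mul, ← Finset.sum_add_distrib]
        exact Finset.sum_congr rfl fun i _ => by ring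
      rw [heq]
      exact avg_linear hΦ β c hirr
    · -- inductive step via van der Corput
      apply vdc hΦ _ (fun n => le_of_eq (ee_norm _))
      intro d hdne
      set Q' : Fin r → Polynomial ℤ := fun i => Polynomial.taylor d (Q i) - Q i with hQ'
      have hev' : ∀ (i : Fin r) (n : ℤ), (Q' i).eval n = (Q i).eval (n + d) - (Q i).eval n := by
        intro i n
        simp only [hQ', Polynomial.eval_sub]
        congr 1
        rw [Polynomial.taylor_apply, Polynomial.eval_comp]
        simp
      have hdeg' : ∀ i, (Q' i).natDegree ≤ D := by
        intro i
        rw [Polynomial.natDegree_le_iff_coeff_eq_zero]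
        intro k hk
        have hk' : (Q i).natDegree ≤ k := le_trans (hdeg i) (by omega)
        simp only [hQ', Polynomial.coeff_sub]
        rw [taylor_coeff_high _ _ _ hk', sub_self]
      have hex' : ∃ i, 1 ≤ (Q' i).natDegree := by
        refine ⟨i₀, ?_⟩
        have hcoeff : (Q' i₀).coeff D = (D + 1 : ℤ) * (Q i₀).coeff (D + 1) * d := by
          simp only [hQ', Polynomial.coeff_sub, Polynomial.taylor_coeff]
          rw [hasse_top (Q i₀) D (le_of_eq hdeg₀)]
          rw [Polynomial.eval_add, Polynomial.eval_C, Polynomial.eval_mul, Polynomial.eval_C,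
            Polynomial.eval_X]
          ring
        have hne : (Q' i₀).coeff D ≠ 0 := by
          rw [hcoeff]
          apply mul_ne_zero (mul_ne_zero _ hlead) hdne
          exact_mod_cast Nat.succ_ne_zero D
        have := Polynomial.le_natDegree_of_ne_zero hne
        omega
      have hmul : (fun n : ℤ => ee (∑ i, (((Q i).eval (n + d) : ℤ) : ℝ) * α i)
            * (starRingEnd ℂ) (ee (∑ i, (((Q i).eval n : ℤ) : ℝ) * α i)))
          = fun n : ℤ => ee (∑ i, (((Q' i).eval n : ℤ) : ℝ) * α i) := by
        funext n
        rw [ee_conj, ← ee_add]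
        congr 1
        rw [← Finset.sum_neg_distrib, ← Finset.sum_add_distrib]
        apply Finset.sum_congr rfl
        intro i _
        rw [hev' i n]
        push_cast
        ring
      have := IH Q' hdeg' hex'
      rw [← hmul] at this
      exact this


section torus
variable {m : ℕ}

local instance : Fact ((0:ℝ) < 1) := ⟨one_pos⟩

noncomputable def chr (k : Fin m → ℤ) : C((Fin m → AddCircle (1:ℝ)), ℂ) where
  toFun := fun x => ∏ j, fourier (k j) (x j)
  continuous_toFun := by
    apply continuous_finset_prod
    intro j _
    exact (fourier (k j)).continuous.comp (continuous_apply j)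

lemma chr_apply (k : Fin m → ℤ) (x : Fin m → AddCircle (1:ℝ)) :
    chr k x = ∏ j, fourier (k j) (x j) := rfl

lemma chr_coe (k : Fin m → ℤ) (v : Fin m → ℝ) :
    chr k (fun j => ((v j : ℝ) : AddCircle (1:ℝ))) = ee (∑ j, (k j : ℝ) * v j) := by
  rw [chr_apply]
  have : ∀ j : Fin m, (fourier (k j) ((v j : ℝ) : AddCircle (1:ℝ)) : ℂ) = ee ((k j : ℝ) * v j) := by
    intro j
    rw [fourier_coe_apply]
    unfold ee
    push_cast
    norm_num
    ring_nf
  simp only [this]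
  unfold ee
  rw [← Complex.exp_sum]
  congr 1
  push_cast [Finset.mul_sum]
  try (apply Finset.sum_congr rfl; intro j _; ring)

lemma chr_mul (k k' : Fin m → ℤ) : chr k * chr k' = chr (k + k') := by
  ext x
  simp only [ContinuousMap.mul_apply, chr_apply, ← Finset.prod_mul_distrib]
  apply Finset.prod_congr rfl
  intro j _
  rw [Pi.add_apply, fourier_add]

lemma chr_zero : (chr (0 : Fin m → ℤ)) = 1 := by
  ext x
  simp [chr_apply, fourier_zero]

lemma chr_star (k : Fin m → ℤ) : star (chr k) = chr (-k) := by
  ext x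
  simp only [ContinuousMap.star_apply, chr_apply, Pi.neg_apply]
  rw [star_prod]
  apply Finset.prod_congr rfl
  intro j _
  rw [fourier_neg]
  rfl

lemma chr_add_point (k : Fin m → ℤ) (x y : Fin m → AddCircle (1:ℝ)) :
    chr k (x + y) = chr k x * chr k y := by
  simp only [chr_apply, ← Finset.prod_mul_distrib]
  apply Finset.prod_congr rfl
  intro j _
  rw [Pi.add_apply, fourier_apply, smul_add, AddCircle.toCircle_add]
  push_cast
  rw [fourier_apply, fourier_apply]

noncomputable def chrSpan (m : ℕ) : Submodule ℂ C((Fin m → AddCircle (1:ℝ)), ℂ) :=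
  Submodule.span ℂ (Set.range (chr (m := m)))

lemma chrSpan_mul_mem {a b : C((Fin m → AddCircle (1:ℝ)), ℂ)}
    (ha : a ∈ chrSpan m) (hb : b ∈ chrSpan m) : a * b ∈ chrSpan m := by
  have key : ∀ k : Fin m → ℤ, ∀ b ∈ chrSpan m, chr k * b ∈ chrSpan m := by
    intro k b hb
    refine Submodule.span_induction ?_ ?_ ?_ ?_ hb
    · rintro x ⟨k', rfl⟩
      rw [chr_mul]
      exact Submodule.subset_span ⟨k + k', rfl⟩
    · rw [mul_zero]; exact Submodule.zero_mem _
    · intro x y _ _ hx hy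
      rw [mul_add]; exact Submodule.add_mem _ hx hy
    · intro c x _ hx
      rw [mul_smul_comm]; exact Submodule.smul_mem _ _ hx
  refine Submodule.span_induction ?_ ?_ ?_ ?_ ha
  · rintro x ⟨k, rfl⟩
    exact key k b hb
  · rw [zero_mul]; exact Submodule.zero_mem _
  · intro x y _ _ hx hy
    rw [add_mul]; exact Submodule.add_mem _ hx hy
  · intro c x _ hx
    rw [smul_mul_assoc]; exact Submodule.smul_mem _ _ hx

lemma chrSpan_star_mem {a : C((Fin m → AddCircle (1:ℝ)), ℂ)}
    (ha : a ∈ chrSpan m) : star a ∈ chrSpan m := by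
  refine Submodule.span_induction ?_ ?_ ?_ ?_ ha
  · rintro x ⟨k, rfl⟩
    rw [chr_star]
    exact Submodule.subset_span ⟨-k, rfl⟩
  · rw [star_zero]; exact Submodule.zero_mem _
  · intro x y _ _ hx hy
    rw [star_add]; exact Submodule.add_mem _ hx hy
  · intro c x _ hx
    rw [star_smul]
    exact Submodule.smul_mem _ _ hx

noncomputable def chrAlg (m : ℕ) : StarSubalgebra ℂ C((Fin m → AddCircle (1:ℝ)), ℂ) where
  carrier := (chrSpan m : Set _)
  mul_mem' := fun ha hb => chrSpan_mul_mem ha hb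
  one_mem' := by
    rw [← chr_zero]
    exact Submodule.subset_span ⟨0, rfl⟩
  add_mem' := fun ha hb => (chrSpan m).add_mem ha hb
  zero_mem' := (chrSpan m).zero_mem
  algebraMap_mem' := fun c => by
    have h1 : (1 : C((Fin m → AddCircle (1:ℝ)), ℂ)) ∈ chrSpan m := by
      rw [← chr_zero]; exact Submodule.subset_span ⟨0, rfl⟩
    have := (chrSpan m).smul_mem c h1
    simpa [Algebra.algebraMap_eq_smul_one] using this
  star_mem' := fun ha => chrSpan_star_mem ha

lemma chrAlg_separates (m : ℕ) : (chrAlg m).SeparatesPoints := by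
  intro x y hxy
  obtain ⟨j, hj⟩ : ∃ j, x j ≠ y j := by
    by_contra h
    push_neg at h
    exact hxy (funext h)
  refine ⟨_, ⟨chr (Pi.single j 1), Submodule.subset_span ⟨Pi.single j 1, rfl⟩, rfl⟩, ?_⟩
  have hx : ∀ z : Fin m → AddCircle (1:ℝ), chr (Pi.single j 1) z = fourier 1 (z j) := by
    intro z
    have hprod := Fintype.prod_eq_single
      (f := fun j' => (fourier ((Pi.single j (1:ℤ) : Fin m → ℤ) j') (z j') : ℂ))
      j (fun j' hj' => by simp only [Pi.single_eq_of_ne hj', fourier_zero])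
    rw [chr_apply, hprod]
    simp only [Pi.single_eq_same]
  simp only [hx]
  rw [fourier_one, fourier_one]
  intro h
  exact hj (AddCircle.injective_toCircle one_ne_zero (Circle.coe_injective h))

lemma chrSpan_dense (m : ℕ) : Dense ((chrSpan m : Set C((Fin m → AddCircle (1:ℝ)), ℂ))) := by
  have h := ContinuousMap.starSubalgebra_topologicalClosure_eq_top_of_separatesPoints
    (chrAlg m) (chrAlg_separates m)
  rw [dense_iff_closure_eq]
  have h2 := congrArg (fun (A : StarSubalgebra ℂ C((Fin m → AddCircle (1:ℝ)), ℂ)) =>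
    (A : Set C((Fin m → AddCircle (1:ℝ)), ℂ))) h
  simp only [StarSubalgebra.topologicalClosure_coe, StarSubalgebra.coe_top] at h2
  exact h2

end torus



section final
variable {m : ℕ}

lemma ee_zero : ee 0 = 1 := by
  unfold ee; simp

lemma cm_integrable (ν : Measure (Fin m → AddCircle (1:ℝ))) [IsProbabilityMeasure ν]
    (g : C((Fin m → AddCircle (1:ℝ)), ℂ)) : Integrable g ν :=
  g.continuous.integrable_of_hasCompactSupport (HasCompactSupport.of_compactSpace _)

lemma integral_chr_one (ν : Measure (Fin m → AddCircle (1:ℝ))) [IsProbabilityMeasure ν]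
    (k : Fin m → ℤ) (Y : Set (Fin m → AddCircle (1:ℝ))) (hYc : IsClosed Y) (hsupp : ν Y = 1)
    (hone : ∀ y ∈ Y, chr k y = 1) : ∫ x, chr k x ∂ν = 1 := by
  have hcompl : ν Yᶜ = 0 := by
    rw [measure_compl hYc.measurableSet (measure_ne_top _ _), hsupp, measure_univ, tsub_self]
  have hae : (fun x => chr k x) =ᵐ[ν] fun _ => (1:ℂ) := by
    rw [Filter.EventuallyEq, ae_iff]
    apply measure_mono_null _ hcompl
    intro x hx
    simp only [Set.mem_setOf_eq] at hx
    intro hxY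
    exact hx (hone x hxY)
  rw [integral_congr_ae hae, integral_const]
  simp

lemma integral_chr_zero (ν : Measure (Fin m → AddCircle (1:ℝ))) [IsProbabilityMeasure ν]
    (k : Fin m → ℤ) (y : Fin m → AddCircle (1:ℝ))
    (hy : Measure.map (fun x => x + y) ν = ν) (hne : chr k y ≠ 1) :
    ∫ x, chr k x ∂ν = 0 := by
  have h1 : ∫ x, chr k x ∂ν = ∫ x, chr k (x + y) ∂ν := by
    conv_lhs => rw [← hy]
    rw [integral_map]
    · exact (continuous_id.add continuous_const).aemeasurable
    · exact (chr k).continuous.aestronglyMeasurable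
  have h2 : ∫ x, chr k (x + y) ∂ν = (∫ x, chr k x ∂ν) * chr k y := by
    simp_rw [chr_add_point k _ y]
    rw [integral_mul_const]
  have h3 : (∫ x, chr k x ∂ν) * (1 - chr k y) = 0 := by
    rw [mul_sub, mul_one, ← h2, ← h1, sub_self]
  rcases mul_eq_zero.1 h3 with h | h
  · exact h
  · exact absurd (by linear_combination -h : chr k y = 1) hne

lemma exists_nonint (c d : ℝ) (hcd : c < d) :
    ∃ t : ℝ, c < t ∧ t < d ∧ ∀ z : ℤ, (z : ℝ) ≠ t := by
  by_cases h : ∃ z : ℤ, (z : ℝ) = (c + d)/2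
  · obtain ⟨z, hz⟩ := h
    set s := min (d - (c+d)/2) 1 / 2 with hs
    have hs0 : 0 < s := by
      apply div_pos _ two_pos
      apply lt_min _ one_pos
      linarith
    have hs1 : s < 1 := by
      have : min (d - (c+d)/2) 1 ≤ 1 := min_le_right _ _
      rw [hs]; linarith
    have hsd : s < d - (c+d)/2 := by
      have h1 : min (d - (c+d)/2) 1 ≤ d - (c+d)/2 := min_le_left _ _
      have h2 : 0 < d - (c+d)/2 := by linarith
      rw [hs]; linarith
    refine ⟨(c+d)/2 + s, by linarith, by linarith, ?_⟩
    intro z' hz'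
    have hint : ((z' - z : ℤ) : ℝ) = s := by push_cast; rw [hz, hz']; ring
    have h0 : (0:ℝ) < ((z' - z : ℤ) : ℝ) := by rw [hint]; exact hs0
    have h1 : ((z' - z : ℤ) : ℝ) < 1 := by rw [hint]; exact hs1
    have : (0:ℤ) < z' - z := by exact_mod_cast h0
    have : (z' - z : ℤ) < 1 := by exact_mod_cast h1
    omega
  · push_neg at h
    exact ⟨(c+d)/2, by linarith, by linarith, h⟩

end final

/-- Let `α₁, …, α_r ∈ ℝ` be such that `1, α₁, …, α_r` are `ℚ`-linearly independent, and let
`u₁, …, u_r : ℤ → ℤ^m` be polynomials with zero constant term.  Then the sequence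
`n ↦ u₁(n) α₁ + ⋯ + u_r(n) α_r (mod 1)` is well-distributed in the subtorus of `(ℝ/ℤ)^m`
which is the image mod 1 of `span_ℝ(u₁) + ⋯ + span_ℝ(u_r)` — formalised as: well-distributed
with respect to any probability measure `ν` supported on that subtorus and invariant under
translation by its elements (i.e. its Haar measure). -/
theorem wellDistributed_in_subtorus (m r : ℕ) (α : Fin r → ℝ)
    (hα : ∀ (q₀ : ℚ) (q : Fin r → ℚ), (q₀ : ℝ) + ∑ i, (q i : ℝ) * α i = 0 →
      q₀ = 0 ∧ q = 0)
    (U : Fin r → Fin m → Polynomial ℤ) (hU : ∀ i j, (U i j).coeff 0 = 0)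
    (V : Submodule ℝ (Fin m → ℝ))
    (hV : V = Submodule.span ℝ
      {v : Fin m → ℝ | ∃ (i : Fin r) (x : ℝ), v = fun j => Polynomial.aeval x (U i j)})
    (Y : Set (Fin m → AddCircle (1 : ℝ)))
    (hY : Y = closure
      ((fun v (j : Fin m) => ((v j : ℝ) : AddCircle (1 : ℝ))) '' (V : Set (Fin m → ℝ))))
    (ν : Measure (Fin m → AddCircle (1 : ℝ))) [IsProbabilityMeasure ν]
    (hsupp : ν Y = 1)
    (hinv : ∀ y ∈ Y, Measure.map (fun x => x + y) ν = ν) :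
    WellDistributed ν
      (fun n : ℤ => fun j =>
        ((∑ i, ((Polynomial.eval n (U i j) : ℤ) : ℝ) * α i : ℝ) : AddCircle (1 : ℝ))) := by
  intro Φ hΦ f
  set u : ℤ → (Fin m → AddCircle (1:ℝ)) := fun n => fun j =>
    ((∑ i, ((Polynomial.eval n (U i j) : ℤ) : ℝ) * α i : ℝ) : AddCircle (1 : ℝ)) with hu
  have hgen : ∀ k : Fin m → ℤ,
      Tendsto (fun N => (∑ n ∈ Φ N, chr k (u n)) / ((Φ N).card : ℂ)) atTop
        (nhds (∫ x, chr k x ∂ν)) := by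
    intro k
    set Q : Fin r → Polynomial ℤ := fun i => ∑ j, Polynomial.C (k j) * U i j with hQ
    have haevalQ : ∀ (i : Fin r) (x : ℝ),
        (Polynomial.aeval x) (Q i) = ∑ j, (k j : ℝ) * (Polynomial.aeval x) (U i j) := by
      intro i x
      rw [hQ]
      simp only [map_sum, map_mul, Polynomial.aeval_C, algebraMap_int_eq, eq_intCast,
        Int.coe_castRingHom, map_intCast]
    have hev : ∀ (i : Fin r) (n : ℤ), (((Q i).eval n : ℤ) : ℝ)
        = ∑ j, (k j : ℝ) * ((Polynomial.eval n (U i j) : ℤ) : ℝ) := by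
      intro i n
      rw [hQ]
      simp only [Polynomial.eval_finset_sum, Polynomial.eval_mul, Polynomial.eval_C]
      push_cast
      rfl
    have hvals : ∀ n : ℤ, chr k (u n) = ee (∑ i, (((Q i).eval n : ℤ) : ℝ) * α i) := by
      intro n
      rw [hu]
      rw [chr_coe k (fun j => (∑ i, ((Polynomial.eval n (U i j) : ℤ) : ℝ) * α i : ℝ))]
      congr 1
      simp only [Finset.mul_sum]
      rw [Finset.sum_comm]
      apply Finset.sum_congr rfl
      intro i _
      rw [hev i n, Finset.sum_mul]
      apply Finset.sum_congr rfl
      intro j _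
      ring
    by_cases hQ0 : ∀ i, Q i = 0
    · have hone : ∀ n, chr k (u n) = 1 := by
        intro n
        rw [hvals n]
        have hz : ∀ i ∈ Finset.univ, (((Q i).eval n : ℤ) : ℝ) * α i = 0 := by
          intro i _
          rw [hQ0 i]
          simp
        rw [Finset.sum_eq_zero hz, ee_zero]
      have havg : ∀ N, (∑ n ∈ Φ N, chr k (u n)) / ((Φ N).card : ℂ) = 1 := by
        intro N
        simp only [hone]
        rw [Finset.sum_const, nsmul_eq_mul, mul_one, div_self]
        exact_mod_cast Nat.cast_ne_zero.2 (Finset.card_pos.2 (hΦ.1 N)).ne'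
      have hint : ∫ x, chr k x ∂ν = 1 := by
        apply integral_chr_one ν k Y (hY ▸ isClosed_closure) hsupp
        intro y hy
        have hEc : IsClosed {x : Fin m → AddCircle (1:ℝ) | chr k x = 1} :=
          isClosed_eq (chr k).continuous continuous_const
        have himg : (fun v (j : Fin m) => ((v j : ℝ) : AddCircle (1 : ℝ)))
            '' (V : Set (Fin m → ℝ)) ⊆ {x | chr k x = 1} := by
          rintro x ⟨v, hvV, rfl⟩
          simp only [Set.mem_setOf_eq]
          rw [chr_coe]
          have hL : ∑ j, (k j : ℝ) * v j = 0 := by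
            let L : (Fin m → ℝ) →ₗ[ℝ] ℝ :=
              { toFun := fun w => ∑ j, (k j : ℝ) * w j
                map_add' := fun w₁ w₂ => by
                  simp [mul_add, Finset.sum_add_distrib]
                map_smul' := fun c w => by
                  simp only [Pi.smul_apply, smul_eq_mul, RingHom.id_apply, Finset.mul_sum]
                  apply Finset.sum_congr rfl
                  intros
                  ring }
            have hVle : V ≤ LinearMap.ker L := by
              rw [hV]
              apply Submodule.span_le.2
              rintro w ⟨i, x, rfl⟩
              simp only [SetLike.mem_coe, LinearMap.mem_ker]
              show ∑ j, (k j : ℝ) * (Polynomial.aeval x) (U i j) = 0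
              rw [← haevalQ i x, hQ0 i, map_zero]
            have hker := hVle hvV
            rw [LinearMap.mem_ker] at hker
            exact hker
          rw [hL, ee_zero]
        have hsub : Y ⊆ {x | chr k x = 1} := by
          rw [hY]
          exact closure_minimal himg hEc
        exact hsub hy
      rw [hint]
      simp only [havg]
      exact tendsto_const_nhds
    · push_neg at hQ0
      obtain ⟨i₀, hi₀⟩ := hQ0
      have hcoeff0 : ∀ i, (Q i).coeff 0 = 0 := by
        intro i
        rw [hQ]
        rw [Polynomial.finset_sum_coeff]
        apply Finset.sum_eq_zero
        intro j _
        rw [Polynomial.coeff_C_mul, hU i j, mul_zero]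
      have hdeg1 : 1 ≤ (Q i₀).natDegree := by
        by_contra h
        push_neg at h
        have h0 : (Q i₀).natDegree = 0 := by omega
        have hC := Polynomial.eq_C_of_natDegree_eq_zero h0
        rw [hcoeff0 i₀] at hC
        simp only [map_zero] at hC
        exact hi₀ hC
      have havg : Tendsto (avg Φ (fun n => ee (∑ i, (((Q i).eval n : ℤ):ℝ) * α i)))
          atTop (nhds 0) := by
        apply weyl hΦ hα (Finset.univ.sup fun i => (Q i).natDegree) Q
        · intro i
          exact Finset.le_sup (f := fun i => (Q i).natDegree) (Finset.mem_univ i)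
        · exact ⟨i₀, hdeg1⟩
      have hintzero : ∫ x, chr k x ∂ν = 0 := by
        set Pr : Polynomial ℝ := (Q i₀).map (Int.castRingHom ℝ) with hPr
        have hPdeg : Pr.natDegree = (Q i₀).natDegree := by
          rw [hPr]
          exact Polynomial.natDegree_map_eq_of_injective Int.cast_injective _
        have hnc : ∃ a b : ℝ, Pr.eval a ≠ Pr.eval b := by
          by_contra hcon
          push_neg at hcon
          have hconst : Pr = Polynomial.C (Pr.eval 0) :=
            Polynomial.funext fun x => by rw [hcon x 0, Polynomial.eval_C]
          have h0 : Pr.natDegree = 0 := by rw [hconst]; exact Polynomial.natDegree_C _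
          omega
        obtain ⟨a, b, hab⟩ := hnc
        obtain ⟨t, ht1, ht2, htni⟩ := exists_nonint (min (Pr.eval a) (Pr.eval b))
          (max (Pr.eval a) (Pr.eval b)) (min_lt_max.2 hab)
        have hmem : t ∈ Set.uIcc (Pr.eval a) (Pr.eval b) := by
          rcases le_total (Pr.eval a) (Pr.eval b) with hle | hle
          · rw [Set.uIcc_of_le hle]
            rw [min_eq_left hle] at ht1
            rw [max_eq_right hle] at ht2
            exact ⟨ht1.le, ht2.le⟩
          · rw [Set.uIcc_of_ge hle]
            rw [min_eq_right hle] at ht1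
            rw [max_eq_left hle] at ht2
            exact ⟨ht1.le, ht2.le⟩
        obtain ⟨x₀, _, hx₀⟩ := intermediate_value_uIcc
          ((Pr.continuous).continuousOn (s := Set.uIcc a b)) hmem
        set v₀ : Fin m → ℝ := fun j => (Polynomial.aeval x₀) (U i₀ j) with hv₀
        have hv₀V : v₀ ∈ V := by
          rw [hV]
          exact Submodule.subset_span ⟨i₀, x₀, rfl⟩
        set y : Fin m → AddCircle (1:ℝ) := fun j => ((v₀ j : ℝ) : AddCircle (1:ℝ)) with hy2
        have hyY : y ∈ Y := by
          rw [hY]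
          exact subset_closure ⟨v₀, hv₀V, rfl⟩
        have haQ : (Polynomial.aeval x₀) (Q i₀) = t := by
          rw [Polynomial.aeval_def, ← Polynomial.eval_map]
          rw [show Polynomial.map (algebraMap ℤ ℝ) (Q i₀) = Pr by rw [hPr, algebraMap_int_eq]]
          exact hx₀
        have hchry : chr k y = ee t := by
          rw [hy2, chr_coe]
          congr 1
          rw [← haQ, haevalQ i₀ x₀]
        apply integral_chr_zero ν k y (hinv y hyY)
        rw [hchry]
        intro hone
        obtain ⟨z, hz⟩ := ee_eq_one t hone
        exact htni z hz.symm
      rw [hintzero]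
      have heq : (fun N => (∑ n ∈ Φ N, chr k (u n)) / ((Φ N).card : ℂ))
          = avg Φ (fun n => ee (∑ i, (((Q i).eval n : ℤ):ℝ) * α i)) := by
        funext N
        unfold avg
        simp only [hvals]
      rw [heq]
      exact havg
  have hspan : ∀ g ∈ chrSpan m,
      Tendsto (fun N => (∑ n ∈ Φ N, g (u n)) / ((Φ N).card : ℂ)) atTop
        (nhds (∫ x, g x ∂ν)) := by
    intro g hg
    refine Submodule.span_induction ?_ ?_ ?_ ?_ hg
    · rintro g' ⟨k, rfl⟩
      exact hgen k
    · simpa using (tendsto_const_nhds : Tendsto (fun _ : ℕ => (0:ℂ)) atTop (nhds 0))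
    · intro g₁ g₂ hg₁ hg₂ h₁ h₂
      have heq : ∀ N, (∑ n ∈ Φ N, (g₁ + g₂) (u n)) / ((Φ N).card : ℂ)
          = (∑ n ∈ Φ N, g₁ (u n)) / ((Φ N).card : ℂ)
            + (∑ n ∈ Φ N, g₂ (u n)) / ((Φ N).card : ℂ) := by
        intro N
        simp only [ContinuousMap.add_apply]
        rw [Finset.sum_add_distrib, add_div]
      have hint : ∫ x, (g₁ + g₂) x ∂ν = (∫ x, g₁ x ∂ν) + ∫ x, g₂ x ∂ν := by
        simp only [ContinuousMap.add_apply]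
        exact integral_add (cm_integrable ν g₁) (cm_integrable ν g₂)
      rw [hint]
      simp only [heq]
      exact h₁.add h₂
    · intro c g' hg' h'
      have heq : ∀ N, (∑ n ∈ Φ N, (c • g') (u n)) / ((Φ N).card : ℂ)
          = c • ((∑ n ∈ Φ N, g' (u n)) / ((Φ N).card : ℂ)) := by
        intro N
        simp only [ContinuousMap.smul_apply, smul_eq_mul]
        rw [← Finset.mul_sum, mul_div_assoc]
      have hint : ∫ x, (c • g') x ∂ν = c • ∫ x, g' x ∂ν := by
        simp only [ContinuousMap.smul_apply]
        exact integral_smul c _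
      rw [hint]
      simp only [heq]
      exact h'.const_smul c
  rw [Metric.tendsto_nhds]
  intro ε hε
  have hf' : f ∈ closure ((chrSpan m : Set C((Fin m → AddCircle (1:ℝ)), ℂ))) := by
    rw [(chrSpan_dense m).closure_eq]
    trivial
  obtain ⟨g, hgS, hdistfg⟩ := Metric.mem_closure_iff.1 hf' (ε/3) (by positivity)
  have hbound : ∀ N, dist ((∑ n ∈ Φ N, f (u n)) / ((Φ N).card : ℂ))
      ((∑ n ∈ Φ N, g (u n)) / ((Φ N).card : ℂ)) ≤ dist f g := by
    intro N
    rw [dist_eq_norm]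
    have hdiff : (∑ n ∈ Φ N, f (u n)) / ((Φ N).card : ℂ)
        - (∑ n ∈ Φ N, g (u n)) / ((Φ N).card : ℂ)
        = avg Φ (fun n => f (u n) - g (u n)) N := by
      unfold avg
      rw [← sub_div, ← Finset.sum_sub_distrib]
    rw [hdiff]
    apply avg_norm_le dist_nonneg _ N (hΦ.1 N)
    intro n
    rw [← dist_eq_norm]
    exact ContinuousMap.dist_apply_le_dist _
  have hintb : dist (∫ x, g x ∂ν) (∫ x, f x ∂ν) ≤ dist f g := by
    rw [dist_eq_norm, ← integral_sub (cm_integrable ν g) (cm_integrable ν f)]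
    have hb := norm_integral_le_of_norm_le_const (C := dist f g) (μ := ν)
      (f := fun x => g x - f x) (Filter.Eventually.of_forall fun x => by
        rw [← dist_eq_norm, dist_comm]
        exact ContinuousMap.dist_apply_le_dist _)
    simpa [measure_univ] using hb
  filter_upwards [Metric.tendsto_nhds.1 (hspan g hgS) (ε/3) (by positivity)] with N hN
  have htri := dist_triangle4 ((∑ n ∈ Φ N, f (u n)) / ((Φ N).card : ℂ))
    ((∑ n ∈ Φ N, g (u n)) / ((Φ N).card : ℂ)) (∫ x, g x ∂ν) (∫ x, f x ∂ν)
  have h1 := hbound N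
  linarith [hintb, hdistfg, hN]
end
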